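/- arXiv:1812.04520 — 6 statements merged into one kernel-verified Lean document; each statement's English description precedes it below -/
import Mathlib

section
/- Let X be a finite-dimensional real vector space with norm ‖·‖ and inner product norm |·|, and 1 ≤ m ≤ dim X − 1. The Busemann–Hausdorff density ψ : G_m(X) → ℝ, defined by 𝓗ᵐ_{‖·‖} ↾ W = ψ(W) · 𝓗ᵐ_{|·|} ↾ W for each m-dimensional subspace W, is continuous for the metric d(W₁,W₂) = ‖π_{W₁} − π_{W₂}‖_{op} on the Grassmannian G_m(X). -/
open Filter Pointwise MeasureTheory
open scoped ENNReal NNReal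

/-- A norm on a real vector space, given as a function. -/
def IsNorm {X : Type*} [AddCommGroup X] [Module ℝ X] (ν : X → ℝ) : Prop :=
  (∀ x, ν x = 0 ↔ x = 0) ∧ (∀ (c : ℝ) (x : X), ν (c • x) = |c| * ν x) ∧
    ∀ x y, ν (x + y) ≤ ν x + ν y

/-- The diameter of a set with respect to the metric induced by a norm `ν`. -/
noncomputable def nuDiam {X : Type*} [AddCommGroup X] [Module ℝ X] (ν : X → ℝ)
    (s : Set X) : ℝ≥0∞ :=
  ⨆ x ∈ s, ⨆ y ∈ s, ENNReal.ofReal (ν (x - y))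

/-- The `m`-dimensional Hausdorff (outer) measure `𝓗ᵐ_ν` associated with a norm `ν`. -/
noncomputable def nuHausdorff {X : Type*} [AddCommGroup X] [Module ℝ X] (ν : X → ℝ)
    (m : ℕ) (A : Set X) : ℝ≥0∞ :=
  ⨆ (δ : ℝ≥0∞) (_ : 0 < δ),
    ⨅ (t : ℕ → Set X) (_ : A ⊆ ⋃ n, t n) (_ : ∀ n, nuDiam ν (t n) ≤ δ),
      ∑' n, nuDiam ν (t n) ^ m


/-!
If `ε = ‖π_{W'} - π_W‖ < 1`, then `π_{W'}` maps `W` into `W'`, shrinks Euclidean lengths on `W`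
by a factor at least `1 - ε` and stretches `ν`-lengths by a factor at most `1 + C ε`, where `C`
compares `ν` with the Euclidean norm. Comparing both Hausdorff measures of the unit ball of `W`
with those of its image gives `ψ W' ≤ ((1 + C ε) / (1 - ε)) ^ m * ψ W`. By symmetry the same bound
holds with `W` and `W'` exchanged, and the factor tends to `1` as `ε → 0`.
-/

namespace IsNorm

variable {X : Type*} [AddCommGroup X] [Module ℝ X] {ν : X → ℝ}

def toSeminorm (hν : IsNorm ν) : Seminorm ℝ X :=
  Seminorm.of ν hν.2.2 fun c x => by rw [hν.2.1, Real.norm_eq_abs]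

lemma nonneg (hν : IsNorm ν) (x : X) : 0 ≤ ν x := apply_nonneg hν.toSeminorm x

end IsNorm

section NormEquivalence

variable {X : Type*} [NormedAddCommGroup X] [NormedSpace ℝ X] [FiniteDimensional ℝ X]
  {ν : X → ℝ}

lemma IsNorm.continuous (hν : IsNorm ν) : Continuous ν :=
  continuousOn_univ.mp (hν.toSeminorm.convexOn.continuousOn isOpen_univ)

lemma IsNorm.exists_le_mul_norm (hν : IsNorm ν) : ∃ C, 0 < C ∧ ∀ x, ν x ≤ C * ‖x‖ :=
  hν.toSeminorm.bound_of_continuous_normedSpace hν.continuous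

lemma IsNorm.exists_norm_le_mul (hν : IsNorm ν) : ∃ C, 0 < C ∧ ∀ x, ‖x‖ ≤ C * ν x := by
  cases subsingleton_or_nontrivial X
  · exact ⟨1, one_pos, fun x => by simp [Subsingleton.elim x 0, (hν.1 0).2 rfl]⟩
  obtain ⟨z, hz, hmin⟩ := (isCompact_sphere (0 : X) 1).exists_isMinOn
    (NormedSpace.sphere_nonempty.mpr zero_le_one) hν.continuous.continuousOn
  have hz0 : z ≠ 0 := ne_zero_of_mem_unit_sphere ⟨z, hz⟩
  have hνz : 0 < ν z := (hν.nonneg z).lt_of_ne fun h => hz0 ((hν.1 z).1 h.symm)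
  refine ⟨(ν z)⁻¹, inv_pos.mpr hνz, fun x => ?_⟩
  rcases eq_or_ne x 0 with rfl | hx
  · simp [(hν.1 0).2 rfl]
  have hxn : 0 < ‖x‖ := norm_pos_iff.mpr hx
  have hmem : ‖x‖⁻¹ • x ∈ Metric.sphere (0 : X) 1 := by
    simp [norm_smul, hxn.ne']
  have h : ν z ≤ ν (‖x‖⁻¹ • x) := hmin hmem
  rw [hν.2.1, abs_of_pos (inv_pos.mpr hxn)] at h
  rw [inv_mul_eq_div, le_div_iff₀ hνz]
  calc ‖x‖ * ν z ≤ ‖x‖ * (‖x‖⁻¹ * ν x) := by gcongr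
    _ = ν x := by field_simp

end NormEquivalence

section ImageBound

variable {X Y : Type*} [AddCommGroup X] [Module ℝ X] [AddCommGroup Y] [Module ℝ Y]
  {ν : X → ℝ} {ν' : Y → ℝ}

lemma ofReal_le_nuDiam (ν : X → ℝ) {s : Set X} {x y : X} (hx : x ∈ s) (hy : y ∈ s) :
    ENNReal.ofReal (ν (x - y)) ≤ nuDiam ν s :=
  le_iSup₂_of_le x hx (le_iSup₂_of_le y hy le_rfl)

lemma nuDiam_mono (ν : X → ℝ) {s t : Set X} (h : s ⊆ t) : nuDiam ν s ≤ nuDiam ν t :=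
  iSup₂_le fun _ hx => iSup₂_le fun _ hy => ofReal_le_nuDiam ν (h hx) (h hy)

lemma nuDiam_image_le {f : X → Y} {s : Set X} {L : ℝ} (hL : 0 ≤ L)
    (hf : ∀ x ∈ s, ∀ y ∈ s, ν' (f x - f y) ≤ L * ν (x - y)) :
    nuDiam ν' (f '' s) ≤ ENNReal.ofReal L * nuDiam ν s := by
  refine iSup₂_le ?_
  rintro - ⟨x, hx, rfl⟩
  refine iSup₂_le ?_
  rintro - ⟨y, hy, rfl⟩
  calc ENNReal.ofReal (ν' (f x - f y)) ≤ ENNReal.ofReal (L * ν (x - y)) :=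
        ENNReal.ofReal_le_ofReal (hf x hx y hy)
    _ = ENNReal.ofReal L * ENNReal.ofReal (ν (x - y)) := ENNReal.ofReal_mul hL
    _ ≤ ENNReal.ofReal L * nuDiam ν s := by gcongr; exact ofReal_le_nuDiam ν hx hy

lemma nuHausdorff_image_le (m : ℕ) {f : X → Y} {s : Set X} {L : ℝ} (hL : 0 < L)
    (hf : ∀ x ∈ s, ∀ y ∈ s, ν' (f x - f y) ≤ L * ν (x - y)) :
    nuHausdorff ν' m (f '' s) ≤ ENNReal.ofReal L ^ m * nuHausdorff ν m s := by
  have hL0 : ENNReal.ofReal L ^ m ≠ 0 := pow_ne_zero _ (ENNReal.ofReal_pos.mpr hL).ne'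
  have hLtop : ENNReal.ofReal L ^ m ≠ ⊤ := ENNReal.pow_ne_top ENNReal.ofReal_ne_top
  have hdiam : ∀ t, nuDiam ν' (f '' (t ∩ s)) ≤ ENNReal.ofReal L * nuDiam ν t := fun t =>
    (nuDiam_image_le hL.le fun x hx y hy => hf x hx.2 y hy.2).trans
      (by gcongr; exact nuDiam_mono ν Set.inter_subset_left)
  refine iSup₂_le fun δ hδ => ?_
  -- A `δ / L`-cover `t` of `s` is mapped to the `δ`-cover `f '' (t n ∩ s)` of `f '' s`.
  calc (⨅ (t : ℕ → Set Y) (_ : f '' s ⊆ ⋃ n, t n) (_ : ∀ n, nuDiam ν' (t n) ≤ δ),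
        ∑' n, nuDiam ν' (t n) ^ m)
      ≤ ENNReal.ofReal L ^ m * ⨅ (t : ℕ → Set X) (_ : s ⊆ ⋃ n, t n)
          (_ : ∀ n, nuDiam ν (t n) ≤ δ / ENNReal.ofReal L), ∑' n, nuDiam ν (t n) ^ m := by
        simp only [ENNReal.mul_iInf_of_ne hL0 hLtop]
        refine le_iInf fun t => le_iInf fun hcover => le_iInf fun htδ => ?_
        refine iInf₂_le_of_le (fun n => f '' (t n ∩ s)) ?_ (iInf_le_of_le (fun n => ?_) ?_)
        · rintro _ ⟨x, hx, rfl⟩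
          obtain ⟨n, hn⟩ := Set.mem_iUnion.mp (hcover hx)
          exact Set.mem_iUnion.mpr ⟨n, Set.mem_image_of_mem f ⟨hn, hx⟩⟩
        · calc nuDiam ν' (f '' (t n ∩ s)) ≤ ENNReal.ofReal L * (δ / ENNReal.ofReal L) :=
                (hdiam (t n)).trans (by gcongr; exact htδ n)
            _ ≤ δ := ENNReal.mul_div_le
        · calc ∑' n, nuDiam ν' (f '' (t n ∩ s)) ^ m
              ≤ ∑' n, (ENNReal.ofReal L * nuDiam ν (t n)) ^ m :=
                ENNReal.tsum_le_tsum fun n => by gcongr; exact hdiam (t n)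
            _ = ENNReal.ofReal L ^ m * ∑' n, nuDiam ν (t n) ^ m := by
                simp_rw [mul_pow]; exact ENNReal.tsum_mul_left
    _ ≤ ENNReal.ofReal L ^ m * nuHausdorff ν m s := by
        gcongr
        exact le_iSup₂_of_le (δ / ENNReal.ofReal L)
          (ENNReal.div_pos hδ.ne' ENNReal.ofReal_ne_top) le_rfl

end ImageBound

section Density

variable {X : Type*} [NormedAddCommGroup X] [NormedSpace ℝ X] [MeasurableSpace X] [BorelSpace X]

def IsHausdorffDensity (ν : X → ℝ) (m : ℕ) (W : Submodule ℝ X) (c : ℝ) : Prop :=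
  ∀ A : Set X, A ⊆ (W : Set X) → MeasurableSet A →
    nuHausdorff ν m A = ENNReal.ofReal c * μH[(m : ℝ)] A

variable {ν : X → ℝ} {m : ℕ}

lemma IsHausdorffDensity.le_mul_of_image {W W' : Submodule ℝ X} {c c' : ℝ}
    (hW : IsHausdorffDensity ν m W c) (hW' : IsHausdorffDensity ν m W' c') (hc : 0 ≤ c)
    {A B : Set X} (hAW : A ⊆ W) (hBW' : B ⊆ W') (hAm : MeasurableSet A) (hBm : MeasurableSet B)
    (hB0 : μH[(m : ℝ)] B ≠ 0) (hBtop : μH[(m : ℝ)] B ≠ ⊤) {a b : ℝ} (ha : 0 ≤ a) (hb : 0 ≤ b)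
    (hνAB : nuHausdorff ν m B ≤ ENNReal.ofReal a * nuHausdorff ν m A)
    (hμAB : μH[(m : ℝ)] A ≤ ENNReal.ofReal b * μH[(m : ℝ)] B) : c' ≤ a * b * c := by
  have key : ENNReal.ofReal c' * μH[(m : ℝ)] B ≤ ENNReal.ofReal (a * b * c) * μH[(m : ℝ)] B :=
    calc ENNReal.ofReal c' * μH[(m : ℝ)] B = nuHausdorff ν m B := (hW' B hBW' hBm).symm
      _ ≤ ENNReal.ofReal a * (ENNReal.ofReal c * μH[(m : ℝ)] A) := by
          rw [← hW A hAW hAm]; exact hνAB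
      _ ≤ ENNReal.ofReal a * (ENNReal.ofReal c * (ENNReal.ofReal b * μH[(m : ℝ)] B)) := by
          gcongr
      _ = ENNReal.ofReal (a * b * c) * μH[(m : ℝ)] B := by
          rw [ENNReal.ofReal_mul (by positivity), ENNReal.ofReal_mul ha]
          ring
  exact (ENNReal.ofReal_le_ofReal_iff (by positivity)).mp
    ((ENNReal.mul_le_mul_iff_left hB0 hBtop).mp key)

variable [FiniteDimensional ℝ X]

theorem IsHausdorffDensity.le_mul_of_map {W W' : Submodule ℝ X} {c c' : ℝ}
    (hW : IsHausdorffDensity ν m W c) (hW' : IsHausdorffDensity ν m W' c') (hc : 0 ≤ c)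
    (hm : Module.finrank ℝ W = m) (T : X →L[ℝ] X) (hTW : Set.MapsTo T W W') {a b : ℝ}
    (ha : 0 < a) (hb : 0 < b) (hνT : ∀ x ∈ W, ν (T x) ≤ a * ν x)
    (hT : ∀ x ∈ W, b * ‖x‖ ≤ ‖T x‖) : c' ≤ (a / b) ^ m * c := by
  subst hm
  set d := Module.finrank ℝ W
  have : (μH[(d : ℝ)] : Measure W).IsAddHaarMeasure := isAddHaarMeasure_hausdorffMeasure
  have hd : (0 : ℝ) ≤ d := d.cast_nonneg
  set S : Set W := Metric.closedBall 0 1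
  set A : Set X := W.subtypeL '' S
  set g : W →L[ℝ] X := T ∘L W.subtypeL
  have hgS : g '' S = T '' A := (Set.image_image T Subtype.val S).symm
  have hAS : μH[(d : ℝ)] A = μH[(d : ℝ)] S :=
    isometry_subtype_coe.hausdorffMeasure_image (Or.inl hd) S
  have hSB : μH[(d : ℝ)] S ≤ ENNReal.ofReal b⁻¹ ^ d * μH[(d : ℝ)] (g '' S) := by
    have hanti : AntilipschitzWith (b⁻¹).toNNReal g := g.antilipschitz_of_bound fun x => by
      rw [Real.coe_toNNReal _ (inv_nonneg.mpr hb.le), ← div_eq_inv_mul, le_div_iff₀' hb]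
      exact hT x x.2
    have := hanti.le_hausdorffMeasure_image hd S
    rwa [ENNReal.rpow_natCast] at this
  have hB0 : μH[(d : ℝ)] (g '' S) ≠ 0 := fun h0 => by
    have : μH[(d : ℝ)] S ≤ 0 := by simpa [h0] using hSB
    exact (Metric.measure_closedBall_pos _ _ one_pos).ne' (le_antisymm this bot_le)
  have hBtop : μH[(d : ℝ)] (g '' S) ≠ ⊤ :=
    ne_top_of_le_ne_top (ENNReal.mul_ne_top (by simp) measure_closedBall_lt_top.ne)
      (g.lipschitz.hausdorffMeasure_image_le hd S)
  have hAW : A ⊆ W := by rintro - ⟨x, -, rfl⟩; exact x.2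
  have hνAB : nuHausdorff ν d (T '' A) ≤ ENNReal.ofReal a ^ d * nuHausdorff ν d A :=
    nuHausdorff_image_le d ha fun x hx y hy => by
      rw [← map_sub]; exact hνT _ (sub_mem (hAW hx) (hAW hy))
  have h := hW.le_mul_of_image (a := a ^ d) (b := b⁻¹ ^ d) hW' hc hAW
    (hgS ▸ (hTW.mono_left hAW).image_subset)
    ((isCompact_closedBall 0 1).image W.subtypeL.continuous).isClosed.measurableSet
    ((isCompact_closedBall 0 1).image g.continuous).isClosed.measurableSet hB0 hBtop
    (by positivity) (by positivity) (by rwa [hgS, ENNReal.ofReal_pow ha.le])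
    (by rwa [hAS, ENNReal.ofReal_pow (inv_nonneg.mpr hb.le)])
  rwa [← mul_pow, ← div_eq_mul_inv] at h

end Density

section Grassmannian

variable {X : Type*} [NormedAddCommGroup X] [InnerProductSpace ℝ X]

lemma norm_starProjection_sub_self_le {U V : Submodule ℝ X} [U.HasOrthogonalProjection]
    [V.HasOrthogonalProjection] {x : X} (hx : x ∈ U) :
    ‖V.starProjection x - x‖ ≤ ‖V.starProjection - U.starProjection‖ * ‖x‖ := by
  simpa [Submodule.starProjection_eq_self_iff.mpr hx] using
    (V.starProjection - U.starProjection).le_opNorm x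

variable [FiniteDimensional ℝ X] [MeasurableSpace X] [BorelSpace X] {ν : X → ℝ} {m : ℕ}

theorem IsHausdorffDensity.le_of_norm_starProjection_sub_lt_one (hν : IsNorm ν) {C₁ C₂ : ℝ}
    (hC₁ : 0 ≤ C₁) (hC₂ : 0 ≤ C₂) (hνle : ∀ x, ν x ≤ C₁ * ‖x‖) (hle : ∀ x, ‖x‖ ≤ C₂ * ν x)
    {W W' : Submodule ℝ X} {c c' : ℝ} (hW : IsHausdorffDensity ν m W c)
    (hW' : IsHausdorffDensity ν m W' c') (hc : 0 ≤ c) (hm : Module.finrank ℝ W = m)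
    (hε : ‖W'.starProjection - W.starProjection‖ < 1) :
    c' ≤ ((1 + C₁ * C₂ * ‖W'.starProjection - W.starProjection‖) /
      (1 - ‖W'.starProjection - W.starProjection‖)) ^ m * c := by
  set ε := ‖W'.starProjection - W.starProjection‖
  have hε0 : 0 ≤ ε := norm_nonneg _
  refine hW.le_mul_of_map hW' hc hm W'.starProjection
    (fun x _ => W'.starProjection_apply_mem x) (by positivity) (by linarith)
    (fun x hx => ?_) (fun x hx => ?_)
  all_goals have hx' := norm_starProjection_sub_self_le (V := W') hx
  · calc ν (W'.starProjection x) ≤ ν x + ν (W'.starProjection x - x) := by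
          simpa using hν.2.2 x (W'.starProjection x - x)
      _ ≤ ν x + C₁ * (ε * ‖x‖) := by gcongr; exact (hνle _).trans (by gcongr)
      _ ≤ ν x + C₁ * (ε * (C₂ * ν x)) := by gcongr; exact hle x
      _ = (1 + C₁ * C₂ * ε) * ν x := by ring
  · have := norm_sub_norm_le x (W'.starProjection x)
    rw [norm_sub_rev] at this
    linarith

end Grassmannian

lemma tendsto_of_le_mul_of_le_mul {α : Type*} {l : Filter α} {f g : α → ℝ} {c : ℝ}
    (hg : Tendsto g l (nhds 1)) (hupper : ∀ᶠ k in l, f k ≤ g k * c)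
    (hlower : ∀ᶠ k in l, c ≤ g k * f k) : Tendsto f l (nhds c) := by
  have hlim : Tendsto (fun k => c / g k) l (nhds c) := by
    have h := (tendsto_const_nhds (x := c)).div hg one_ne_zero
    rwa [div_one] at h
  have hlim' : Tendsto (fun k => g k * c) l (nhds c) := by simpa using hg.mul_const c
  refine tendsto_of_tendsto_of_tendsto_of_le_of_le' hlim hlim' ?_ hupper
  filter_upwards [hlower, hg.eventually (lt_mem_nhds one_pos)] with k hk hpos
  rwa [div_le_iff₀ hpos, mul_comm]

theorem stmt9_general {X : Type*} [NormedAddCommGroup X] [InnerProductSpace ℝ X]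
    [FiniteDimensional ℝ X] [MeasurableSpace X] [BorelSpace X]
    (ν : X → ℝ) (hν : IsNorm ν) (m : ℕ)
    (ψ : Submodule ℝ X → ℝ)
    (hψ : ∀ W : Submodule ℝ X, Module.finrank ℝ W = m →
      0 < ψ W ∧ ∀ A : Set X, A ⊆ (W : Set X) → MeasurableSet A →
        nuHausdorff ν m A = ENNReal.ofReal (ψ W) * μH[(m : ℝ)] A) :
    ∀ (W : Submodule ℝ X) (Ws : ℕ → Submodule ℝ X),
      Module.finrank ℝ W = m → (∀ k, Module.finrank ℝ (Ws k) = m) →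
      Tendsto
        (fun k => ‖(Ws k).subtypeL.comp ((Ws k).orthogonalProjectionOnto) -
          W.subtypeL.comp (W.orthogonalProjectionOnto)‖) atTop (nhds 0) →
      Tendsto (fun k => ψ (Ws k)) atTop (nhds (ψ W)) := by
  intro W Ws hW hWs htend
  change Tendsto (fun k => ‖(Ws k).starProjection - W.starProjection‖) atTop (nhds 0) at htend
  obtain ⟨C₁, hC₁, hνle⟩ := hν.exists_le_mul_norm
  obtain ⟨C₂, hC₂, hle⟩ := hν.exists_norm_le_mul
  set G : ℝ → ℝ := fun t => ((1 + C₁ * C₂ * t) / (1 - t)) ^ m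
  have hG : Tendsto (fun k => G ‖(Ws k).starProjection - W.starProjection‖) atTop (nhds 1) := by
    have h := (show ContinuousAt G 0 by fun_prop (disch := norm_num)).tendsto.comp htend
    rwa [show G 0 = 1 by simp [G]] at h
  have hsmall := htend.eventually_lt_const one_pos
  refine tendsto_of_le_mul_of_le_mul hG (hsmall.mono fun k hk => ?_) (hsmall.mono fun k hk => ?_)
  · exact IsHausdorffDensity.le_of_norm_starProjection_sub_lt_one hν hC₁.le hC₂.le hνle hle
      (hψ W hW).2 (hψ (Ws k) (hWs k)).2 (hψ W hW).1.le hW hk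
  · rw [norm_sub_rev] at hk
    simpa only [norm_sub_rev] using IsHausdorffDensity.le_of_norm_starProjection_sub_lt_one hν
      hC₁.le hC₂.le hνle hle (hψ (Ws k) (hWs k)).2 (hψ W hW).2 (hψ (Ws k) (hWs k)).1.le (hWs k) hk

/-- The Busemann–Hausdorff density `ψ` is continuous on the Grassmannian of
`m`-dimensional subspaces, with the metric `d(W₁,W₂) = ‖π_{W₁} − π_{W₂}‖_op`
(sequential continuity). -/
theorem stmt9 {X : Type*} [NormedAddCommGroup X] [InnerProductSpace ℝ X]
    [FiniteDimensional ℝ X] [MeasurableSpace X] [BorelSpace X]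
    (ν : X → ℝ) (hν : IsNorm ν) (m : ℕ) (hm : 1 ≤ m) (hm' : m ≤ Module.finrank ℝ X - 1)
    (ψ : Submodule ℝ X → ℝ)
    (hψ : ∀ W : Submodule ℝ X, Module.finrank ℝ W = m →
      0 < ψ W ∧ ∀ A : Set X, A ⊆ (W : Set X) → MeasurableSet A →
        nuHausdorff ν m A = ENNReal.ofReal (ψ W) * μH[(m : ℝ)] A) :
    ∀ (W : Submodule ℝ X) (Ws : ℕ → Submodule ℝ X),
      Module.finrank ℝ W = m → (∀ k, Module.finrank ℝ (Ws k) = m) →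
      Tendsto
        (fun k => ‖(Ws k).subtypeL.comp ((Ws k).orthogonalProjectionOnto) -
          W.subtypeL.comp (W.orthogonalProjectionOnto)‖) atTop (nhds 0) →
      Tendsto (fun k => ψ (Ws k)) atTop (nhds (ψ W)) :=
  stmt9_general ν hν m ψ hψ
end

section
/- Let X be a finite-dimensional real normed space, m ≥ 1, and A ⊆ X a Borel set with 𝓗ᵐ_{‖·‖}(A) < ∞. Then π ↦ 𝓗ᵐ_{‖·‖}(π(A)) is a Borel measurable function on the space Hom_m(X,X) of linear endomorphisms of rank at most m. -/
/-!
Restrict the `δ`-approximations of `μH[d]` to countable covers by open sets. For a compact `K`,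
an open cover of `π '' K` still covers `π' '' K` for all `π'` near `π`, so
`π ↦ openHausdorffApprox d δ (π '' K)` is upper semicontinuous, hence Borel. Thickening each set
of an arbitrary `δ`-cover slightly gives an open `2δ`-cover with almost the same sum, so these
approximations still increase to `μH[d]` as `δ → 0`, and `π ↦ μH[d] (π '' K)` is a countable
supremum of Borel functions. For a general `A` of finite measure, inner regularity exhausts `A`
by compact sets up to a `μH[d]`-null set, whose image under the Lipschitz map `π` is again null.
-/

open Filter MeasureTheory Metric Set
open scoped ENNReal NNReal Topology

noncomputable def openHausdorffApprox {Y : Type*} [EMetricSpace Y] (d : ℝ) (δ : ℝ≥0∞)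
    (s : Set Y) : ℝ≥0∞ :=
  ⨅ (t : ℕ → Set Y) (_ : ∀ n, IsOpen (t n)) (_ : s ⊆ ⋃ n, t n) (_ : ∀ n, ediam (t n) ≤ δ),
    ∑' n, ediam (t n) ^ d

section openHausdorffApprox

variable {Y : Type*} [EMetricSpace Y] {d : ℝ}

theorem openHausdorffApprox_le {δ : ℝ≥0∞} {s : Set Y} {t : ℕ → Set Y}
    (ht : ∀ n, IsOpen (t n)) (hst : s ⊆ ⋃ n, t n) (htδ : ∀ n, ediam (t n) ≤ δ) :
    openHausdorffApprox d δ s ≤ ∑' n, ediam (t n) ^ d :=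
  iInf₂_le_of_le t ht <| iInf₂_le_of_le hst htδ le_rfl

theorem upperSemicontinuous_openHausdorffApprox_image {P X : Type*} [TopologicalSpace P]
    [TopologicalSpace X] {F : P → X → Y} (hF : Continuous (Function.uncurry F)) {K : Set X}
    (hK : IsCompact K) (δ : ℝ≥0∞) :
    UpperSemicontinuous fun p => openHausdorffApprox d δ (F p '' K) := by
  intro p c hc
  obtain ⟨t, ht, hcov, htδ, hsum⟩ :
      ∃ t : ℕ → Set Y, (∀ n, IsOpen (t n)) ∧ F p '' K ⊆ ⋃ n, t n ∧
        (∀ n, ediam (t n) ≤ δ) ∧ ∑' n, ediam (t n) ^ d < c := by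
    simpa only [openHausdorffApprox, iInf_lt_iff, exists_prop] using hc
  have hU : IsOpen (⋃ n, t n) := isOpen_iUnion ht
  have hcov' : ∀ᶠ p' in 𝓝 p, ∀ x ∈ K, F p' x ∈ ⋃ n, t n :=
    hK.eventually_forall_of_forall_eventually fun x hx =>
      hF.continuousAt.eventually_mem (hU.mem_nhds (hcov (mem_image_of_mem _ hx)))
  filter_upwards [hcov'] with p' hp'
  exact (openHausdorffApprox_le ht (image_subset_iff.2 hp') htδ).trans_lt hsum

theorem exists_pos_rpow_add_two_mul_le (a : ℝ≥0∞) {δ e : ℝ≥0∞} (hδ : 0 < δ) (he : e ≠ 0) :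
    ∃ η : ℝ≥0, 0 < η ∧ 2 * (η : ℝ≥0∞) ≤ δ ∧ (a + 2 * η) ^ d ≤ a ^ d + e := by
  have h2η : Tendsto (fun η : ℝ≥0 => 2 * (η : ℝ≥0∞)) (𝓝 0) (𝓝 0) := by
    simpa using ENNReal.Tendsto.const_mul (ENNReal.continuous_coe.tendsto 0)
      (Or.inr ENNReal.ofNat_ne_top)
  have hpow : ∀ᶠ η : ℝ≥0 in 𝓝 0, (a + 2 * η) ^ d ≤ a ^ d + e := by
    rcases eq_or_ne (a ^ d) ⊤ with htop | hfin
    · simp [htop]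
    have hlim : Tendsto (fun η : ℝ≥0 => (a + 2 * η) ^ d) (𝓝 0) (𝓝 (a ^ d)) := by
      have hadd := h2η.const_add a
      rw [add_zero] at hadd
      exact (ENNReal.continuous_rpow_const.tendsto a).comp hadd
    exact (hlim.eventually_lt_const (ENNReal.lt_add_right hfin he)).mono fun _ => le_of_lt
  have hsmall : ∀ᶠ η : ℝ≥0 in 𝓝 0, 2 * (η : ℝ≥0∞) ≤ δ :=
    (h2η.eventually_lt_const hδ).mono fun _ => le_of_lt
  obtain ⟨η, ⟨hηpow, hηδ⟩, hη⟩ :=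
    (((hpow.and hsmall).filter_mono (nhdsWithin_le_nhds (s := Ioi 0))).and
      self_mem_nhdsWithin).exists
  exact ⟨η, hη, hηδ, hηpow⟩

theorem openHausdorffApprox_two_mul_le (hd : 0 < d) {δ : ℝ≥0∞} (hδ : 0 < δ) {s : Set Y}
    {t : ℕ → Set Y} (hst : s ⊆ ⋃ n, t n) (htδ : ∀ n, ediam (t n) ≤ δ) :
    openHausdorffApprox d (2 * δ) s ≤ ∑' n, ⨆ _ : (t n).Nonempty, ediam (t n) ^ d := by
  refine ENNReal.le_of_forall_pos_le_add fun ε hε _ => ?_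
  obtain ⟨ε', hε'0, hε'⟩ := ENNReal.exists_pos_sum_of_countable
    (ENNReal.coe_ne_zero.2 hε.ne') ℕ
  choose η hη0 hηδ hηpow using fun n =>
    exists_pos_rpow_add_two_mul_le (ediam (t n)) hδ (ENNReal.coe_ne_zero.2 (hε'0 n).ne')
  have hdiam : ∀ n, ediam (thickening (η n) (t n)) ≤ ediam (t n) + 2 * η n := fun n =>
    ediam_thickening_le (η n)
  have hterm : ∀ n, ediam (thickening (η n) (t n)) ^ d ≤
      (⨆ _ : (t n).Nonempty, ediam (t n) ^ d) + ε' n := by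
    intro n
    rcases (t n).eq_empty_or_nonempty with hn | hn
    · simp [hn, ENNReal.zero_rpow_of_pos hd]
    · rw [iSup_pos hn]
      exact (ENNReal.rpow_le_rpow (hdiam n) hd.le).trans (hηpow n)
  calc openHausdorffApprox d (2 * δ) s
      ≤ ∑' n, ediam (thickening (η n) (t n)) ^ d :=
        openHausdorffApprox_le (fun n => isOpen_thickening)
          (hst.trans (iUnion_mono fun n => self_subset_thickening (by exact_mod_cast hη0 n) _))
          fun n => (hdiam n).trans ((add_le_add (htδ n) (hηδ n)).trans_eq (two_mul δ).symm)
    _ ≤ ∑' n, ((⨆ _ : (t n).Nonempty, ediam (t n) ^ d) + ε' n) := ENNReal.tsum_le_tsum hterm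
    _ ≤ (∑' n, ⨆ _ : (t n).Nonempty, ediam (t n) ^ d) + ε := by
        rw [ENNReal.tsum_add]; exact add_le_add le_rfl hε'.le

theorem hausdorffMeasure_eq_iSup_openHausdorffApprox [MeasurableSpace Y] [BorelSpace Y]
    (hd : 0 < d) (s : Set Y) :
    μH[d] s = ⨆ n : ℕ, openHausdorffApprox d (n + 1 : ℝ≥0∞)⁻¹ s := by
  rw [Measure.hausdorffMeasure_apply]
  apply le_antisymm
  · refine iSup₂_le fun r hr => ?_
    obtain ⟨n, hn⟩ := ENNReal.exists_inv_nat_lt hr.ne'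
    have hnr : (n + 1 : ℝ≥0∞)⁻¹ ≤ r :=
      (ENNReal.inv_le_inv.2 le_self_add).trans hn.le
    refine le_iSup_of_le n <| le_iInf₂ fun t _ => le_iInf₂ fun hst htδ => ?_
    exact iInf₂_le_of_le t hst <| iInf_le_of_le (fun k => (htδ k).trans hnr) <|
      ENNReal.tsum_le_tsum fun k => iSup_le fun _ => le_rfl
  · refine iSup_le fun n => ?_
    set r : ℝ≥0∞ := (n + 1 : ℝ≥0∞)⁻¹ / 2
    have hr : 0 < r := ENNReal.half_pos (ENNReal.inv_ne_zero.2 (by simp))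
    have h2r : 2 * r = (n + 1 : ℝ≥0∞)⁻¹ := ENNReal.mul_div_cancel (by simp) (by simp)
    refine le_iSup₂_of_le r hr <| le_iInf₂ fun t hst => le_iInf fun htδ => ?_
    rw [← h2r]
    exact openHausdorffApprox_two_mul_le hd hr hst htδ

end openHausdorffApprox

theorem MeasurableSet.exists_monotone_isCompact_measure_sdiff_iUnion_eq_zero {α : Type*}
    [TopologicalSpace α] [T2Space α] [MeasurableSpace α] [OpensMeasurableSpace α]
    {μ : Measure α} [μ.InnerRegularCompactLTTop] {A : Set α} (hA : MeasurableSet A)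
    (hμA : μ A ≠ ∞) :
    ∃ K : ℕ → Set α, Monotone K ∧ (∀ n, IsCompact (K n) ∧ K n ⊆ A) ∧ μ (A \ ⋃ n, K n) = 0 := by
  choose K hKA hK hμK using fun n : ℕ =>
    hA.exists_isCompact_sdiff_lt hμA (ENNReal.inv_ne_zero.2 (ENNReal.natCast_ne_top n))
  refine ⟨accumulate K, monotone_accumulate, fun n => ⟨isCompact_accumulate hK n,
    iUnion₂_subset fun k _ => hKA k⟩, nonpos_iff_eq_zero.1 ?_⟩
  refine ge_of_tendsto' ENNReal.tendsto_inv_nat_nhds_zero fun n => ?_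
  rw [iUnion_accumulate]
  exact (measure_mono (sdiff_subset_sdiff_right (subset_iUnion K n))).trans (hμK n).le

section Measurability

variable {P X Y : Type*} [TopologicalSpace P] [MeasurableSpace P] [OpensMeasurableSpace P]
  [EMetricSpace Y] [MeasurableSpace Y] [BorelSpace Y] {d : ℝ}

theorem measurable_hausdorffMeasure_image_of_isCompact [TopologicalSpace X] {F : P → X → Y}
    (hF : Continuous (Function.uncurry F)) (hd : 0 < d) {K : Set X} (hK : IsCompact K) :
    Measurable fun p => μH[d] (F p '' K) := by
  simp_rw [hausdorffMeasure_eq_iSup_openHausdorffApprox hd]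
  exact Measurable.iSup fun n => (upperSemicontinuous_openHausdorffApprox_image hF hK _).measurable

theorem measurable_hausdorffMeasure_image [EMetricSpace X] [CompleteSpace X]
    [SecondCountableTopology X] [MeasurableSpace X] [BorelSpace X] {F : P → X → Y}
    (hF : Continuous (Function.uncurry F)) (hFlip : ∀ p, ∃ C, LipschitzWith C (F p))
    (hd : 0 < d) {A : Set X} (hA : MeasurableSet A) (hμA : μH[d] A ≠ ∞) :
    Measurable fun p => μH[d] (F p '' A) := by
  obtain ⟨K, hKmono, hK, hnull⟩ :=
    hA.exists_monotone_isCompact_measure_sdiff_iUnion_eq_zero hμA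
  have himage : ∀ p, μH[d] (F p '' A) = ⨆ n, μH[d] (F p '' K n) := by
    intro p
    obtain ⟨C, hC⟩ := hFlip p
    have hsplit : F p '' A ⊆ (⋃ n, F p '' K n) ∪ F p '' (A \ ⋃ n, K n) := by
      rw [← image_iUnion, ← image_union, union_sdiff_self]
      exact image_mono subset_union_right
    have hnull' : μH[d] (F p '' (A \ ⋃ n, K n)) = 0 :=
      nonpos_iff_eq_zero.1 <| (hC.hausdorffMeasure_image_le hd.le _).trans (by simp [hnull])
    have hmono : Monotone fun n => F p '' K n := fun _ _ h => image_mono (hKmono h)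
    rw [← hmono.measure_iUnion]
    refine le_antisymm ?_ (measure_mono (iUnion_subset fun n => image_mono (hK n).2))
    calc μH[d] (F p '' A)
        ≤ μH[d] (⋃ n, F p '' K n) + μH[d] (F p '' (A \ ⋃ n, K n)) :=
          (measure_mono hsplit).trans (measure_union_le _ _)
      _ = μH[d] (⋃ n, F p '' K n) := by rw [hnull', add_zero]
  simp_rw [himage]
  exact Measurable.iSup fun n => measurable_hausdorffMeasure_image_of_isCompact hF hd (hK n).1

end Measurability

/-- For a Borel set `A` with finite `𝓗ᵐ` measure, the function
`π ↦ 𝓗ᵐ_{‖·‖}(π(A))` is Borel measurable on the space of linear endomorphisms of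
rank at most `m` (with the operator norm topology). -/
theorem stmt12 {X : Type*} [NormedAddCommGroup X] [NormedSpace ℝ X]
    [FiniteDimensional ℝ X] [MeasurableSpace X] [BorelSpace X]
    [MeasurableSpace (X →L[ℝ] X)] [BorelSpace (X →L[ℝ] X)]
    (m : ℕ) (hm : 1 ≤ m) (A : Set X) (hA : MeasurableSet A)
    (hAfin : μH[(m : ℝ)] A < ⊤) :
    Measurable
      (fun π : {π : X →L[ℝ] X // Module.finrank ℝ (LinearMap.range π.toLinearMap) ≤ m} =>
        μH[(m : ℝ)] (⇑π.1 '' A)) :=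
  (measurable_hausdorffMeasure_image (F := fun π : X →L[ℝ] X => ⇑π)
    isBoundedBilinearMap_apply.continuous (fun π => ⟨_, π.lipschitz⟩) (Nat.cast_pos.2 hm) hA
    hAfin.ne).comp measurable_subtype_coe
end

section
/- Let X be a finite-dimensional inner product space, m ≥ 1, and W an m-dimensional subspace. The restriction of any Haar measure on W to the collection of nonempty compact convex subsets of W is continuous with respect to the Hausdorff distance. Consequently, if π_k → π in Hom_m(X,X) with ran π ⊆ W and A ⊆ X compact convex, then 𝓗ᵐ_{|·|}(π_W(π_k(A))) → 𝓗ᵐ_{|·|}(π(A)), and since π_W is 1-Lipschitz this gives 𝓗ᵐ_{|·|}(π(A)) ≤ liminf_k 𝓗ᵐ_{|·|}(π_k(A)). -/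
open Filter MeasureTheory Metric
open scoped ENNReal


lemma mem_of_near {E : Type*} [NormedAddCommGroup E] [InnerProductSpace ℝ E]
    {C D : Set E} (hCc : IsCompact C) (hCconv : Convex ℝ C) (hCne : C.Nonempty)
    {x : E} {r ε : ℝ} (hr : 0 < r) (hball : Metric.ball x r ⊆ D)
    (hD : ∀ y ∈ D, Metric.infDist y C ≤ ε) (hε : 2 * ε < r) : x ∈ C := by
  by_contra hx
  obtain ⟨c, hcC, hc⟩ := hCc.exists_infDist_eq_dist hCne x
  have hd : 0 < dist x c := by
    rw [← hc]
    exact (hCc.isClosed.notMem_iff_infDist_pos hCne).mp hx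
  -- variational inequality
  have hinf : ‖x - c‖ = ⨅ w : C, ‖x - w‖ := by
    rw [← dist_eq_norm, ← hc, Metric.infDist_eq_iInf]
    simp_rw [dist_eq_norm]
  have hvar : ∀ w ∈ C, inner ℝ (x - c) (w - c) ≤ (0:ℝ) :=
    (norm_eq_iInf_iff_real_inner_le_zero hCconv hcC).mp hinf
  set u : E := (r / 2 / dist x c) • (x - c) with hu
  have hnu : ‖u‖ = r / 2 := by
    rw [hu, norm_smul, ← dist_eq_norm, Real.norm_eq_abs, abs_of_pos (by positivity)]
    field_simp
  have hyD : x + u ∈ D := by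
    apply hball
    simp only [Metric.mem_ball, dist_self_add_left, hnu]
    linarith
  have hyc : x + u - c = (1 + r / 2 / dist x c) • (x - c) := by
    rw [hu]; module
  have hnyc : ‖x + u - c‖ = dist x c + r / 2 := by
    rw [hyc, norm_smul, Real.norm_eq_abs, abs_of_pos (by positivity), ← dist_eq_norm]
    field_simp
  have key : Metric.infDist (x + u) C ≤ ε := hD _ hyD
  have hge : dist x c + r / 2 ≤ Metric.infDist (x + u) C := by
    rw [← hnyc]
    apply not_lt.mp
    rw [Metric.infDist_lt_iff hCne]
    push_neg
    intro z hz
    have h1 : inner ℝ (x + u - c) (z - c) ≤ (0:ℝ) := by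
      rw [hyc, real_inner_smul_left]
      exact mul_nonpos_of_nonneg_of_nonpos (by positivity) (hvar z hz)
    have h2 : ‖x + u - z‖ ^ 2 = ‖x + u - c‖^2 - 2 * inner ℝ (x + u - c) (z - c) + ‖z - c‖^2 := by
      have := @norm_sub_sq_real E _ _ (x + u - c) (z - c)
      have hxz : x + u - c - (z - c) = x + u - z := by abel
      rw [hxz] at this
      linarith
    have : ‖x + u - c‖^2 ≤ ‖x + u - z‖^2 := by nlinarith [sq_nonneg ‖z - c‖]
    rw [dist_eq_norm]
    nlinarith [norm_nonneg (x + u - c), norm_nonneg (x + u - z)]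
  linarith [Metric.infDist_nonneg (x := x + u) (s := C)]


lemma haar_cont {E : Type*} [NormedAddCommGroup E] [InnerProductSpace ℝ E]
    [FiniteDimensional ℝ E] [MeasurableSpace E] [BorelSpace E]
    (μ : Measure E) (hμ : μ.IsAddHaarMeasure) (C : ℕ → Set E) (D : Set E)
    (hC : ∀ k, IsCompact (C k) ∧ Convex ℝ (C k) ∧ (C k).Nonempty)
    (hDc : IsCompact D) (hDconv : Convex ℝ D) (hDne : D.Nonempty)
    (hH : Tendsto (fun k => Metric.hausdorffDist (C k) D) atTop (nhds 0)) :
    Tendsto (fun k => μ (C k)) atTop (nhds (μ D)) := by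
  haveI := hμ
  have hED : ∀ k, EMetric.hausdorffEdist (C k) D ≠ ⊤ := fun k =>
    Metric.hausdorffEdist_ne_top_of_nonempty_of_bounded (hC k).2.2 hDne
      (hC k).1.isBounded hDc.isBounded
  -- limsup ≤ μ D
  have hlimsup : limsup (fun k => μ (C k)) atTop ≤ μ D := by
    have h1 : ∀ ε : ℝ, 0 < ε → limsup (fun k => μ (C k)) atTop ≤ μ (cthickening ε D) := by
      intro ε hε
      have hev : ∀ᶠ k in atTop, μ (C k) ≤ μ (cthickening ε D) := by
        filter_upwards [hH.eventually (eventually_lt_nhds hε)] with k hk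
        refine measure_mono fun x hx => ?_
        have h := (Metric.infDist_le_hausdorffDist_of_mem hx (hED k)).trans hk.le
        rw [Metric.mem_cthickening_iff]
        rw [Metric.infDist] at h
        exact (ENNReal.le_ofReal_iff_toReal_le (Metric.infEdist_ne_top hDne) hε.le).mpr h
      exact limsup_le_of_le (by isBoundedDefault) hev
    have h2 : Tendsto (fun ε : ℝ => μ (cthickening ε D)) (nhdsWithin 0 (Set.Ioi 0))
        (nhds (μ D)) := by
      have := tendsto_measure_cthickening (μ := μ) (s := D)
        ⟨1, one_pos, (hDc.cthickening.measure_lt_top).ne⟩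
      rw [hDc.isClosed.closure_eq] at this
      exact this.mono_left nhdsWithin_le_nhds
    exact ge_of_tendsto h2 (eventually_nhdsWithin_of_forall fun ε hε => h1 ε hε)
  -- μ D ≤ liminf
  have hliminf : μ D ≤ liminf (fun k => μ (C k)) atTop := by
    have hK : ∀ K : Set E, IsCompact K → K ⊆ interior D →
        μ K ≤ liminf (fun k => μ (C k)) atTop := by
      intro K hKc hKD
      obtain ⟨δ, hδ, hδK⟩ := hKc.exists_cthickening_subset_open isOpen_interior hKD
      have hev : ∀ᶠ k in atTop, μ K ≤ μ (C k) := by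
        filter_upwards [hH.eventually (eventually_lt_nhds (by positivity : (0:ℝ) < δ/4))]
          with k hk
        refine measure_mono fun x hx => ?_
        refine mem_of_near (C := C k) (D := D) (ε := δ/4) (hC k).1 (hC k).2.1 (hC k).2.2 hδ
          (((Metric.ball_subset_thickening hx δ).trans
            ((Metric.thickening_subset_cthickening δ K).trans
              (hδK.trans interior_subset))) : Metric.ball x δ ⊆ D)
          (fun y hy => ?_) (by linarith)
        have hED' : EMetric.hausdorffEdist D (C k) ≠ ⊤ := by
          have h := hED k; unfold EMetric.hausdorffEdist at h ⊢; rw [Metric.hausdorffEDist_comm]; exact h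
        have := Metric.infDist_le_hausdorffDist_of_mem hy hED'
        rw [Metric.hausdorffDist_comm] at this
        exact this.trans hk.le
      exact le_liminf_of_le (by isBoundedDefault) hev
    have hDsub : μ D ≤ μ (interior D) := by
      calc μ D ≤ μ (interior D ∪ frontier D) := by
            refine measure_mono ?_
            rw [← closure_eq_interior_union_frontier]
            exact subset_closure
        _ ≤ μ (interior D) + μ (frontier D) := measure_union_le _ _
        _ = μ (interior D) := by rw [hDconv.addHaar_frontier μ, add_zero]
    refine hDsub.trans ?_
    rw [isOpen_interior.measurableSet.measure_eq_iSup_isCompact]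
    exact iSup₂_le fun K hK' => iSup_le fun hKc => hK K hKc hK'
  exact tendsto_of_le_liminf_of_limsup_le hliminf hlimsup


/-- (a) Any Haar measure on an `m`-dimensional subspace `W`, restricted to nonempty
compact convex subsets, is continuous with respect to the Hausdorff distance.
(b) Consequently, if `π_k → π` in the space of rank-`≤ m` endomorphisms with
`ran π ⊆ W` and `A` is compact convex, then
`𝓗ᵐ(π_W(π_k(A))) → 𝓗ᵐ(π(A))` and `𝓗ᵐ(π(A)) ≤ liminf_k 𝓗ᵐ(π_k(A))`. -/
theorem stmt13 {X : Type*} [NormedAddCommGroup X] [InnerProductSpace ℝ X]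
    [FiniteDimensional ℝ X] [MeasurableSpace X] [BorelSpace X]
    (m : ℕ) (hm : 1 ≤ m) (W : Submodule ℝ X) (hW : Module.finrank ℝ W = m) :
    (∀ μ : Measure W, μ.IsAddHaarMeasure →
      ∀ (C : ℕ → Set W) (D : Set W),
        (∀ k, IsCompact (C k) ∧ Convex ℝ (C k) ∧ (C k).Nonempty) →
        IsCompact D → Convex ℝ D → D.Nonempty →
        Tendsto (fun k => Metric.hausdorffDist (C k) D) atTop (nhds 0) →
        Tendsto (fun k => μ (C k)) atTop (nhds (μ D))) ∧
    (∀ (πs : ℕ → X →L[ℝ] X) (π : X →L[ℝ] X),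
      (∀ k, Module.finrank ℝ (LinearMap.range (πs k).toLinearMap) ≤ m) →
      Module.finrank ℝ (LinearMap.range π.toLinearMap) ≤ m →
      LinearMap.range π.toLinearMap ≤ W →
      Tendsto (fun k => ‖πs k - π‖) atTop (nhds 0) →
      ∀ A : Set X, IsCompact A → Convex ℝ A →
        Tendsto
          (fun k => μH[(m : ℝ)]
            (⇑(W.subtypeL.comp (Submodule.orthogonalProjection W)) '' (⇑(πs k) '' A)))
          atTop (nhds (μH[(m : ℝ)] (⇑π '' A))) ∧
        μH[(m : ℝ)] (⇑π '' A) ≤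
          Filter.liminf (fun k => μH[(m : ℝ)] (⇑(πs k) '' A)) atTop) := by
  constructor
  · exact fun μ hμ C D hC hDc hDconv hDne hH => haar_cont μ hμ C D hC hDc hDconv hDne hH
  · intro πs π _ _ hran hconv A hA hAconv
    have hm0 : (0:ℝ) ≤ (m:ℝ) := Nat.cast_nonneg m
    have hiso : Isometry ((↑) : W → X) := fun x y => rfl
    have hmeas : ∀ s : Set W, μH[(m : ℝ)] (((↑) : W → X) '' s) = μH[(m : ℝ)] s :=
      fun s => hiso.hausdorffMeasure_image (Or.inl hm0) s
    -- the projection as a map X → X is 1-Lipschitz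
    have hlip : LipschitzWith 1 ⇑(W.subtypeL.comp (Submodule.orthogonalProjection W)) := by
      apply LipschitzWith.of_dist_le_mul
      intro x y
      rw [NNReal.coe_one, one_mul, dist_eq_norm, dist_eq_norm, ← map_sub]
      calc ‖(W.subtypeL.comp (Submodule.orthogonalProjection W)) (x - y)‖
          = ‖Submodule.orthogonalProjection W (x - y)‖ := rfl
        _ ≤ ‖Submodule.orthogonalProjection W‖ * ‖x - y‖ := (Submodule.orthogonalProjection W).le_opNorm _
        _ ≤ 1 * ‖x - y‖ := by
            apply mul_le_mul_of_nonneg_right (Submodule.orthogonalProjection_norm_le W) (norm_nonneg _)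
        _ = ‖x - y‖ := one_mul _
    set P : ℕ → X →L[ℝ] W := fun k => (Submodule.orthogonalProjection W).comp (πs k) with hP
    set Q : X →L[ℝ] W := (Submodule.orthogonalProjection W).comp π with hQdef
    have hQ : ∀ x, ((Q x : W) : X) = π x := by
      intro x
      have hx : π x ∈ W := hran ⟨x, rfl⟩
      have := Submodule.orthogonalProjection_mem_subspace_eq_self (K := W) ⟨π x, hx⟩
      simp only [hQdef, ContinuousLinearMap.comp_apply]
      rw [this]
    have himg1 : ∀ k, ⇑(W.subtypeL.comp (Submodule.orthogonalProjection W)) '' (⇑(πs k) '' A)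
        = ((↑) : W → X) '' (⇑(P k) '' A) := by
      intro k
      rw [Set.image_image, Set.image_image]
      rfl
    have himg2 : ⇑π '' A = ((↑) : W → X) '' (⇑Q '' A) := by
      rw [Set.image_image]
      exact Set.image_congr fun x _ => (hQ x).symm
    -- empty case
    rcases A.eq_empty_or_nonempty with rfl | hAne
    · simp only [Set.image_empty, measure_empty]
      exact ⟨tendsto_const_nhds, by simp⟩
    -- Haar measure instance
    have hHaar : (μH[(m : ℝ)] : Measure W).IsAddHaarMeasure := by
      subst hW; infer_instance
    -- bound on A
    obtain ⟨R, hR⟩ := hA.isBounded.exists_norm_le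
    -- Hausdorff distance convergence
    have hdist : Tendsto (fun k => Metric.hausdorffDist (⇑(P k) '' A) (⇑Q '' A)) atTop (nhds 0) := by
      have hb : ∀ k, Metric.hausdorffDist (⇑(P k) '' A) (⇑Q '' A) ≤ ‖πs k - π‖ * R := by
        intro k
        have hRnn : 0 ≤ R := le_trans (norm_nonneg _) (hR _ hAne.choose_spec)
        have hnn : 0 ≤ ‖πs k - π‖ * R := mul_nonneg (norm_nonneg _) hRnn
        have hptd : ∀ a ∈ A, dist (P k a) (Q a) ≤ ‖πs k - π‖ * R := by
          intro a ha
          rw [Subtype.dist_eq, dist_eq_norm]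
          have : ((P k a : W) : X) - ((Q a : W) : X) = Submodule.orthogonalProjection W (πs k a - π a) := by
            simp [hP, hQdef, map_sub]
          rw [this]
          calc ‖(Submodule.orthogonalProjection W (πs k a - π a) : X)‖
              ≤ ‖πs k a - π a‖ := by
                calc ‖(Submodule.orthogonalProjection W (πs k a - π a) : X)‖
                    ≤ ‖Submodule.orthogonalProjection W‖ * ‖πs k a - π a‖ :=
                      (Submodule.orthogonalProjection W).le_opNorm _
                  _ ≤ 1 * ‖πs k a - π a‖ :=
                      mul_le_mul_of_nonneg_right (Submodule.orthogonalProjection_norm_le W) (norm_nonneg _)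
                  _ = _ := one_mul _
            _ = ‖(πs k - π) a‖ := by simp
            _ ≤ ‖πs k - π‖ * ‖a‖ := (πs k - π).le_opNorm a
            _ ≤ ‖πs k - π‖ * R := by gcongr; exact hR a ha
        apply Metric.hausdorffDist_le_of_mem_dist hnn
        · rintro _ ⟨a, ha, rfl⟩; exact ⟨Q a, Set.mem_image_of_mem _ ha, hptd a ha⟩
        · rintro _ ⟨a, ha, rfl⟩
          exact ⟨P k a, Set.mem_image_of_mem _ ha, by rw [dist_comm]; exact hptd a ha⟩
      have h0 : Tendsto (fun k => ‖πs k - π‖ * R) atTop (nhds 0) := by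
        simpa using hconv.mul_const R
      exact squeeze_zero (fun k => Metric.hausdorffDist_nonneg) hb h0
    -- apply part (a)
    have hCk : ∀ k, IsCompact (⇑(P k) '' A) ∧ Convex ℝ (⇑(P k) '' A) ∧ (⇑(P k) '' A).Nonempty :=
      fun k => ⟨hA.image (P k).continuous, hAconv.linear_image (P k).toLinearMap, hAne.image _⟩
    have hDc : IsCompact (⇑Q '' A) := hA.image Q.continuous
    have hDconv : Convex ℝ (⇑Q '' A) := hAconv.linear_image Q.toLinearMap
    have hmain := haar_cont (μH[(m : ℝ)]) hHaar (fun k => ⇑(P k) '' A) (⇑Q '' A)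
      hCk hDc hDconv (hAne.image _) hdist
    have htend : Tendsto
        (fun k => μH[(m : ℝ)] (⇑(W.subtypeL.comp (Submodule.orthogonalProjection W)) '' (⇑(πs k) '' A)))
        atTop (nhds (μH[(m : ℝ)] (⇑π '' A))) := by
      simp only [himg1, himg2, hmeas]
      exact hmain
    refine ⟨htend, ?_⟩
    have heq : μH[(m : ℝ)] (⇑π '' A) = liminf
        (fun k => μH[(m : ℝ)] (⇑(W.subtypeL.comp (Submodule.orthogonalProjection W)) '' (⇑(πs k) '' A)))
        atTop := (htend.liminf_eq).symm
    rw [heq]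
    refine liminf_le_liminf ?_ (by isBoundedDefault) (by isBoundedDefault)
    apply Eventually.of_forall
    intro k
    have := hlip.hausdorffMeasure_image_le hm0 (⇑(πs k) '' A)
    simpa using this
end

section
/- Let W be an m-dimensional Euclidean space and n a positive integer. There is a constant c(m,n) such that for all nonempty compact convex sets C, C′ ⊆ B(0,n) ⊆ W with Hausdorff distance δ = dist_𝓗(C,C′) ≤ 1, one has |𝓗ᵐ(C) − 𝓗ᵐ(C′)| ≤ δ · c(m,n). -/
/-!
Since each of `C`, `C'` lies in the `δ`-thickening `· + closedBall 0 δ` of the other, it suffices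
to bound `𝓗ᵐ(C + closedBall 0 δ) - 𝓗ᵐ(C)` by `c δ` for convex `C ⊆ closedBall 0 n` and `δ ≤ 1`.

The key estimate is that a compact convex set in `closedBall 0 R` containing no ball of radius `r`
has measure `O(r)`. Take a simplex `v₀, …, vₘ` of maximal volume with vertices in `C`. By
maximality every `x ∈ C` has coordinates in `[-1, 1]` with respect to the edges `vⱼ - v₀`
(replacing `vⱼ` by `x` multiplies the volume by the `j`-th coordinate of `x - v₀`), so `𝓗ᵐ(C)`
is at most a constant times the volume of the simplex. The simplex in turn contains a ball about
its barycentre of radius comparable to its volume, and that radius is less than `r`.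

If `C` contains no ball of radius `2δ`, then `C + closedBall 0 δ` contains no ball of radius
`3δ`, so its measure is `O(δ)`. Otherwise, taking `ρ` close to the supremum of the radii of balls
inside `C`, `C` contains a ball of radius `ρ > δ` but none of radius `2ρ`. Then
`C + closedBall 0 δ` lies in the image of `C` under the homothety of ratio `1 + δ / ρ` about the
centre of that ball, which multiplies the measure by at most `1 + (2ᵐ - 1) δ / ρ`, while
`𝓗ᵐ(C) = O(ρ)`.
-/

open MeasureTheory Metric Set Module Function
open scoped Pointwise

theorem one_add_pow_le_one_add_mul (m : ℕ) {t : ℝ} (h0 : 0 ≤ t) (h1 : t ≤ 1) :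
    (1 + t) ^ m ≤ 1 + (2 ^ m - 1) * t := by
  have h := (convexOn_pow m).2 (mem_Ici.2 zero_le_one) (mem_Ici.2 zero_le_two)
    (sub_nonneg.2 h1) h0 (by ring)
  simp only [smul_eq_mul, one_pow] at h
  calc (1 + t) ^ m = ((1 - t) * 1 + t * 2) ^ m := by ring
    _ ≤ (1 - t) * 1 + t * 2 ^ m := h
    _ = 1 + (2 ^ m - 1) * t := by ring

theorem Metric.subset_cthickening_hausdorffDist {X : Type*} [PseudoMetricSpace X]
    {s t : Set X} (h : hausdorffEDist s t ≠ ⊤) : s ⊆ cthickening (hausdorffDist s t) t :=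
  fun _ hx => mem_cthickening_iff.2 <| (infEDist_le_hausdorffEDist_of_mem hx).trans_eq
    (ENNReal.ofReal_toReal h).symm

theorem Module.Basis.exists_basis_det_mul_repr_eq_det_update {K M ι : Type*} [Field K]
    [AddCommGroup M] [Module K M] [Fintype ι] [DecidableEq ι] (b : Basis ι K M) {u : ι → M}
    (hu : b.det u ≠ 0) :
    ∃ ub : Basis ι K M, ⇑ub = u ∧ ∀ w i, b.det u * ub.repr w i = b.det (update u i w) := by
  obtain ⟨hli, hsp⟩ := b.is_basis_iff_det.2 (isUnit_iff_ne_zero.2 hu)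
  refine ⟨Basis.mk hli hsp.ge, Basis.coe_mk _ _, fun w i => ?_⟩
  simpa using LinearMap.congr_fun (b.det_smul_mk_coord_eq_det_update hli hsp.ge i) w

section Module

variable {E : Type*} [AddCommGroup E] [Module ℝ E]

def simplexEdges {m : ℕ} (v : Fin (m + 1) → E) : Fin m → E := fun j => v j.succ - v 0

def Module.Basis.cube {ι : Type*} [Fintype ι] (b : Basis ι ℝ E) : Set E :=
  b.equivFun ⁻¹' univ.pi fun _ => Icc (-1) 1

theorem Module.Basis.image_constr_cube {ι : Type*} [Fintype ι] (b ub : Basis ι ℝ E) :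
    b.constr ℕ ub '' b.cube = ub.cube := by
  have h : ⇑(b.constr ℕ ub) = ub.equivFun.symm ∘ b.equivFun := by
    funext x
    simp [b.constr_apply_fintype ℕ]
  rw [h, image_comp, Basis.cube, Basis.cube, image_preimage_eq _ b.equivFun.surjective,
    LinearEquiv.image_symm_eq_preimage]

theorem Convex.add_sum_smul_simplexEdges_mem {C : Set E} (hC : Convex ℝ C) {m : ℕ}
    {v : Fin (m + 1) → E} (hv : ∀ i, v i ∈ C) {t : Fin m → ℝ} (ht : ∀ j, 0 ≤ t j)
    (hsum : ∑ j, t j ≤ 1) : v 0 + ∑ j, t j • simplexEdges v j ∈ C := by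
  have hcomb : v 0 + ∑ j, t j • simplexEdges v j
      = ∑ i, (Fin.cons (1 - ∑ j, t j) t : Fin (m + 1) → ℝ) i • v i := by
    simp only [Fin.sum_univ_succ, Fin.cons_zero, Fin.cons_succ, simplexEdges, smul_sub,
      Finset.sum_sub_distrib, sub_smul, one_smul, ← Finset.sum_smul]
    abel
  rw [hcomb]
  refine hC.sum_mem (fun i _ => ?_) (by simp [Fin.sum_univ_succ]) (fun i _ => hv i)
  refine Fin.cases ?_ (fun j => ?_) i
  · simpa using hsum
  · simpa using ht j

theorem abs_det_update_simplexEdges_le_of_isMaxOn {m : ℕ} (b : Basis (Fin m) ℝ E) {C : Set E}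
    {v : Fin (m + 1) → E} (hv : v ∈ univ.pi fun _ => C)
    (hmax : IsMaxOn (fun v => |b.det (simplexEdges v)|) (univ.pi fun _ => C) v) {x : E}
    (hx : x ∈ C) (j : Fin m) :
    |b.det (update (simplexEdges v) j (x - v 0))| ≤ |b.det (simplexEdges v)| := by
  have hupd : simplexEdges (update v j.succ x) = update (simplexEdges v) j (x - v 0) := by
    have h0 : update v j.succ x 0 = v 0 := update_of_ne (Fin.succ_ne_zero j).symm x v
    funext i
    rcases eq_or_ne i j with rfl | hij
    · simp [simplexEdges, h0]
    · simp [simplexEdges, h0, hij]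
  rw [← hupd]
  refine hmax fun i _ => ?_
  rcases eq_or_ne i j.succ with rfl | hij
  · simpa using hx
  · simpa [hij] using hv i trivial

end Module

section NormedSpace

variable {E : Type*} [NormedAddCommGroup E] [NormedSpace ℝ E]

theorem Module.Basis.abs_det_update_le {ι : Type*} [Fintype ι] [DecidableEq ι]
    (b : Basis ι ℝ E) {M L : ℝ} (hM : 0 ≤ M) (hbound : ∀ w : ι → E, |b.det w| ≤ M * ∏ i, ‖w i‖)
    {u : ι → E} (hu : ∀ i, ‖u i‖ ≤ L) (j : ι) (w : E) :
    |b.det (update u j w)| ≤ M * L ^ (Fintype.card ι - 1) * ‖w‖ := by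
  have hL : ∏ i ∈ Finset.univ \ {j}, ‖u i‖ ≤ L ^ (Fintype.card ι - 1) :=
    calc ∏ i ∈ Finset.univ \ {j}, ‖u i‖ ≤ ∏ _i ∈ Finset.univ \ {j}, L :=
          Finset.prod_le_prod (fun _ _ => norm_nonneg _) fun i _ => hu i
      _ = L ^ (Fintype.card ι - 1) := by simp [Finset.card_sdiff]
  calc |b.det (update u j w)| ≤ M * ∏ i, ‖update u j w i‖ := hbound _
    _ = M * (‖w‖ * ∏ i ∈ Finset.univ \ {j}, ‖u i‖) := by
      rw [← Finset.prod_update_of_mem (Finset.mem_univ j) (fun i => ‖u i‖)]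
      congr 1
      refine Finset.prod_congr rfl fun i _ => ?_
      rcases eq_or_ne i j with rfl | hij <;> simp [*]
    _ ≤ M * (‖w‖ * L ^ (Fintype.card ι - 1)) := by gcongr
    _ = M * L ^ (Fintype.card ι - 1) * ‖w‖ := by ring

theorem Convex.closedBall_subset_of_abs_repr_le {C : Set E} (hC : Convex ℝ C) {m : ℕ}
    {v : Fin (m + 1) → E} (hv : ∀ i, v i ∈ C) (ub : Basis (Fin m) ℝ E)
    (hub : ⇑ub = simplexEdges v) {A ρ : ℝ} (hA0 : 0 ≤ A) (hA : ∀ w j, |ub.repr w j| ≤ A * ‖w‖)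
    (hρ : ((m : ℝ) + 1) ^ 2 * A * ρ ≤ 1) :
    closedBall (v 0 + ((m : ℝ) + 1)⁻¹ • ∑ j, simplexEdges v j) ρ ⊆ C := by
  intro y hy
  set c := v 0 + ((m : ℝ) + 1)⁻¹ • ∑ j, simplexEdges v j
  set t : Fin m → ℝ := fun j => ub.repr (y - v 0) j
  have hdev : ∀ j, |t j - ((m : ℝ) + 1)⁻¹| ≤ (((m : ℝ) + 1) ^ 2)⁻¹ := by
    intro j
    have hc : c - v 0 = ∑ k, ((m : ℝ) + 1)⁻¹ • ub k := by
      simp [c, hub, Finset.smul_sum]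
    have hsplit : t j - ((m : ℝ) + 1)⁻¹ = ub.repr (y - c) j := by
      rw [show y - c = (y - v 0) - (c - v 0) by abel, map_sub, Finsupp.sub_apply, hc,
        ub.repr_sum_self]
    calc |t j - ((m : ℝ) + 1)⁻¹| = |ub.repr (y - c) j| := by rw [hsplit]
      _ ≤ A * ‖y - c‖ := hA _ _
      _ ≤ A * ρ := by gcongr; exact mem_closedBall_iff_norm.1 hy
      _ ≤ (((m : ℝ) + 1) ^ 2)⁻¹ := by field_simp; linarith
  have hy : y = v 0 + ∑ j, t j • simplexEdges v j := by
    rw [← hub, ub.sum_repr (y - v 0), add_sub_cancel]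
  rw [hy]
  refine hC.add_sum_smul_simplexEdges_mem hv (fun j => ?_) ?_
  · have hinv : (((m : ℝ) + 1) ^ 2)⁻¹ ≤ ((m : ℝ) + 1)⁻¹ := by
      gcongr
      nlinarith
    linarith [(abs_le.1 (hdev j)).1]
  · calc ∑ j, t j ≤ ∑ _j : Fin m, (((m : ℝ) + 1)⁻¹ + (((m : ℝ) + 1) ^ 2)⁻¹) :=
          Finset.sum_le_sum fun j _ => by linarith [(abs_le.1 (hdev j)).2]
      _ ≤ 1 := by
        rw [Finset.sum_const, Finset.card_univ, Fintype.card_fin, nsmul_eq_mul]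
        field_simp
        nlinarith

theorem abs_det_simplexEdges_le_of_forall_not_closedBall_subset {m : ℕ} (b : Basis (Fin m) ℝ E)
    {C : Set E} (hC : Convex ℝ C) {v : Fin (m + 1) → E} (hv : ∀ i, v i ∈ C)
    (hD : b.det (simplexEdges v) ≠ 0) {F r : ℝ} (hF0 : 0 ≤ F)
    (hF : ∀ j w, |b.det (update (simplexEdges v) j w)| ≤ F * ‖w‖)
    (hno : ∀ x, ¬ closedBall x r ⊆ C) :
    |b.det (simplexEdges v)| ≤ F * ((m : ℝ) + 1) ^ 2 * r := by
  have hDpos : 0 < |b.det (simplexEdges v)| := abs_pos.2 hD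
  obtain ⟨ub, hub, hrepr⟩ := b.exists_basis_det_mul_repr_eq_det_update hD
  have hcoord : ∀ w j, |ub.repr w j| ≤ F / |b.det (simplexEdges v)| * ‖w‖ := fun w j => by
    rw [div_mul_eq_mul_div, le_div_iff₀ hDpos, mul_comm, ← abs_mul, hrepr]
    exact hF j w
  by_contra! hlt
  refine hno _ (hC.closedBall_subset_of_abs_repr_le hv ub hub (by positivity) hcoord ?_)
  rw [mul_comm, ← mul_assoc, mul_div_assoc', div_le_one hDpos]
  linarith

theorem Convex.add_closedBall_subset_image_homothety {C : Set E} (hC : Convex ℝ C) {x : E}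
    {r δ : ℝ} (hr : 0 < r) (hδ : 0 ≤ δ) (hball : closedBall x r ⊆ C) :
    C + closedBall 0 δ ⊆ AffineMap.homothety x (1 + δ / r) '' C := by
  rintro _ ⟨a, ha, e, he, rfl⟩
  set t := δ / r
  have ht : 0 ≤ t := by positivity
  rw [show closedBall (0 : E) δ = t • closedBall 0 r by
    rw [smul_closedBall _ _ hr.le, smul_zero, Real.norm_of_nonneg ht, div_mul_cancel₀ _ hr.ne']]
    at he
  obtain ⟨d, hd, rfl⟩ := he
  have hxd : x + d ∈ C := hball (by simpa using hd)
  refine ⟨(1 + t)⁻¹ • a + (t * (1 + t)⁻¹) • (x + d),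
    hC ha hxd (by positivity) (by positivity) (by field_simp), ?_⟩
  rw [AffineMap.homothety_apply, vsub_eq_sub, vadd_eq_add]
  match_scalars <;> field_simp
  ring

theorem exists_closedBall_subset_forall_not_closedBall_two_mul_subset [Nontrivial E]
    {C : Set E} (hC : Bornology.IsBounded C) {δ : ℝ} (hδ : 0 < δ)
    (h : ∃ x, closedBall x (2 * δ) ⊆ C) :
    ∃ r, δ < r ∧ (∃ x, closedBall x r ⊆ C) ∧ ∀ x, ¬ closedBall x (2 * r) ⊆ C := by
  set A := {r : ℝ | ∃ x : E, closedBall x r ⊆ C}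
  have hA : BddAbove A := by
    refine ⟨diam C / 2, fun r ⟨x, hx⟩ => ?_⟩
    rcases lt_or_ge r 0 with hr | hr
    · linarith [diam_nonneg (s := C)]
    · linarith [diam_closedBall_eq x hr ▸ diam_mono hx hC]
  have h2δ : 2 * δ ≤ sSup A := le_csSup hA h
  obtain ⟨r, hrA, hr⟩ := exists_lt_of_lt_csSup (s := A) ⟨_, h⟩ (half_lt_self (by linarith))
  refine ⟨r, by linarith, hrA, fun x hx => ?_⟩
  linarith [le_csSup hA ⟨x, hx⟩]

end NormedSpace

section FiniteDimensional

variable {E : Type*} [NormedAddCommGroup E] [NormedSpace ℝ E] [FiniteDimensional ℝ E]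

theorem Module.Basis.isCompact_cube {ι : Type*} [Fintype ι] (b : Basis ι ℝ E) :
    IsCompact b.cube :=
  b.equivFun.toContinuousLinearEquiv.toHomeomorph.isCompact_preimage.2
    (isCompact_univ_pi fun _ => isCompact_Icc)

theorem Module.Basis.continuous_det {ι : Type*} [Fintype ι] [DecidableEq ι] (b : Basis ι ℝ E) :
    Continuous fun v : ι → E => b.det v := by
  simp only [Basis.det_apply]
  exact Continuous.matrix_det <| continuous_matrix fun i j =>
    (b.coord i).continuous_of_finiteDimensional.comp (continuous_apply j)

theorem exists_isMaxOn_abs_det_simplexEdges {m : ℕ} (b : Basis (Fin m) ℝ E) {C : Set E}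
    (hC : IsCompact C) (hne : C.Nonempty) :
    ∃ v ∈ univ.pi (fun _ => C),
      IsMaxOn (fun v => |b.det (simplexEdges v)|) (univ.pi fun _ => C) v :=
  (isCompact_univ_pi fun _ => hC).exists_isMaxOn (univ_pi_nonempty_iff.2 fun _ => hne)
    (b.continuous_det.comp <| continuous_pi fun j =>
      (continuous_apply j.succ).sub (continuous_apply 0)).abs.continuousOn

omit [FiniteDimensional ℝ E] in
theorem exists_det_simplexEdges_ne_zero_of_mem_interior {m : ℕ} (b : Basis (Fin m) ℝ E)
    {C : Set E} {x : E} (hx : x ∈ interior C) :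
    ∃ v ∈ univ.pi fun _ => C, b.det (simplexEdges v) ≠ 0 := by
  have hev : ∀ᶠ t in nhds (0 : ℝ), ∀ j, x + t • b j ∈ C :=
    Filter.eventually_all.2 fun j =>
      ((continuous_const.add (continuous_id.smul continuous_const)).tendsto' 0 x
        (by simp)).eventually (mem_interior_iff_mem_nhds.1 hx)
  obtain ⟨t, ht, ht0⟩ := ((hev.filter_mono nhdsWithin_le_nhds).and
    (self_mem_nhdsWithin : {t : ℝ | t ≠ 0} ∈ nhdsWithin 0 {0}ᶜ)).exists
  set v : Fin (m + 1) → E := Fin.cons x fun j => x + t • b j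
  have hedges : simplexEdges v = fun j => t • b j := by
    funext j
    simp [simplexEdges, v]
  refine ⟨v, fun i _ => Fin.cases (interior_subset hx) ht i, ?_⟩
  rw [hedges, b.det.map_smul_univ (fun _ => t), b.det_self, Finset.prod_const, smul_eq_mul,
    mul_one]
  exact pow_ne_zero _ ht0

variable [MeasurableSpace E] [BorelSpace E] (μ : Measure E) [μ.IsAddHaarMeasure]

theorem Module.Basis.addHaar_cube {ι : Type*} [Fintype ι] [DecidableEq ι]
    (b ub : Basis ι ℝ E) : μ ub.cube = ENNReal.ofReal |b.det ub| * μ b.cube := by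
  rw [← b.image_constr_cube ub, Measure.addHaar_image_linearMap, Basis.det_apply,
    Basis.toMatrix_eq_toMatrix_constr, LinearMap.det_toMatrix]

theorem measure_le_of_forall_abs_repr_sub_le_one {ι : Type*} [Fintype ι] [DecidableEq ι]
    (b ub : Basis ι ℝ E) {C : Set E} (p : E) (hC : ∀ x ∈ C, ∀ i, |ub.repr (x - p) i| ≤ 1) :
    μ C ≤ ENNReal.ofReal |b.det ub| * μ b.cube := by
  rw [← b.addHaar_cube μ ub, ← measure_preimage_add_right μ (-p) ub.cube]
  exact measure_mono fun x hx i _ => by simpa [← sub_eq_add_neg] using abs_le.1 (hC x hx i)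

theorem measure_le_of_isMaxOn_abs_det_simplexEdges {m : ℕ} (b : Basis (Fin m) ℝ E)
    {C : Set E} {v : Fin (m + 1) → E} (hv : v ∈ univ.pi fun _ => C)
    (hmax : IsMaxOn (fun v => |b.det (simplexEdges v)|) (univ.pi fun _ => C) v)
    (hD : b.det (simplexEdges v) ≠ 0) :
    μ C ≤ ENNReal.ofReal |b.det (simplexEdges v)| * μ b.cube := by
  obtain ⟨ub, hub, hrepr⟩ := b.exists_basis_det_mul_repr_eq_det_update hD
  refine (measure_le_of_forall_abs_repr_sub_le_one μ b ub (v 0) fun y hy j => ?_).trans_eq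
    (by rw [hub])
  have h := abs_det_update_simplexEdges_le_of_isMaxOn b hv hmax hy j
  rw [← hrepr, abs_mul] at h
  exact le_of_mul_le_mul_left (by linarith) (abs_pos.2 hD)

theorem exists_toReal_measure_le_mul_of_forall_not_closedBall_subset {R : ℝ} (hR : 0 ≤ R) :
    ∃ K, 0 ≤ K ∧ ∀ (C : Set E) (r : ℝ), IsCompact C → Convex ℝ C → C ⊆ closedBall 0 R →
      (∀ x, ¬ closedBall x r ⊆ C) → (μ C).toReal ≤ K * r := by
  set m := finrank ℝ E
  set b := finBasis ℝ E
  obtain ⟨M, hM, hbound⟩ := b.det.exists_bound_of_continuous b.continuous_det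
  set F := M * (2 * R) ^ (m - 1)
  refine ⟨F * ((m : ℝ) + 1) ^ 2 * (μ b.cube).toReal, by positivity,
    fun C r hC hconv hCR hno => ?_⟩
  have hr : 0 ≤ r := by
    by_contra! hr
    exact hno 0 (by simp [closedBall_eq_empty.2 hr])
  rcases (interior C).eq_empty_or_nonempty with hint | ⟨x, hx⟩
  · have hfr : C ⊆ frontier C := by
      rw [frontier, hint, sdiff_empty]
      exact subset_closure
    rw [measure_mono_null hfr (hconv.addHaar_frontier μ), ENNReal.toReal_zero]
    positivity
  obtain ⟨v, hv, hmax⟩ := exists_isMaxOn_abs_det_simplexEdges b hC ⟨x, interior_subset hx⟩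
  have hD : b.det (simplexEdges v) ≠ 0 := by
    obtain ⟨v', hv', hD'⟩ := exists_det_simplexEdges_ne_zero_of_mem_interior b hx
    exact abs_pos.1 ((abs_pos.2 hD').trans_le (hmax hv'))
  have hedges : ∀ i, ‖simplexEdges v i‖ ≤ 2 * R := fun i => by
    change ‖v i.succ - v 0‖ ≤ 2 * R
    have h₁ := mem_closedBall_zero_iff.1 (hCR (hv i.succ trivial))
    have h₂ := mem_closedBall_zero_iff.1 (hCR (hv 0 trivial))
    linarith [norm_sub_le (v i.succ) (v 0)]
  have hμ := measure_le_of_isMaxOn_abs_det_simplexEdges μ b hv hmax hD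
  calc (μ C).toReal ≤ |b.det (simplexEdges v)| * (μ b.cube).toReal := by
        refine (ENNReal.toReal_mono ?_ hμ).trans_eq ?_
        · exact ENNReal.mul_ne_top ENNReal.ofReal_ne_top b.isCompact_cube.measure_lt_top.ne
        · rw [ENNReal.toReal_mul, ENNReal.toReal_ofReal (abs_nonneg _)]
    _ ≤ F * ((m : ℝ) + 1) ^ 2 * r * (μ b.cube).toReal := by
        gcongr
        refine abs_det_simplexEdges_le_of_forall_not_closedBall_subset b hconv
          (fun i => hv i trivial) hD (by positivity) (fun j w => ?_) hno
        simpa using b.abs_det_update_le hM.le hbound hedges j w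
    _ = _ := by ring

theorem toReal_measure_add_closedBall_le_of_closedBall_subset {C : Set E} (hC : IsCompact C)
    (hconv : Convex ℝ C) {x : E} {r δ : ℝ} (hr : 0 < r) (hball : closedBall x r ⊆ C)
    (hδ : 0 ≤ δ) (hδr : δ ≤ r) :
    (μ (C + closedBall 0 δ)).toReal ≤ (1 + (2 ^ finrank ℝ E - 1) * (δ / r)) * (μ C).toReal := by
  have himage := Measure.addHaar_image_homothety μ x (1 + δ / r) C
  have hfin : μ (AffineMap.homothety x (1 + δ / r) '' C) ≠ ⊤ := by
    rw [himage]
    exact ENNReal.mul_ne_top ENNReal.ofReal_ne_top hC.measure_lt_top.ne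
  calc (μ (C + closedBall 0 δ)).toReal
      ≤ (μ (AffineMap.homothety x (1 + δ / r) '' C)).toReal :=
        ENNReal.toReal_mono hfin
          (measure_mono (hconv.add_closedBall_subset_image_homothety hr hδ hball))
    _ = (1 + δ / r) ^ finrank ℝ E * (μ C).toReal := by
        rw [himage, ENNReal.toReal_mul, ENNReal.toReal_ofReal (abs_nonneg _),
          abs_of_nonneg (by positivity)]
    _ ≤ _ := by
        gcongr
        exact one_add_pow_le_one_add_mul _ (by positivity) (div_le_one_of_le₀ hδr hr.le)

end FiniteDimensional

section InnerProductSpace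

variable {E : Type*} [NormedAddCommGroup E] [InnerProductSpace ℝ E]

theorem ContinuousLinearMap.exists_norm_le_one_apply_eq_norm [CompleteSpace E] (f : E →L[ℝ] ℝ) :
    ∃ ν : E, ‖ν‖ ≤ 1 ∧ f ν = ‖f‖ := by
  obtain ⟨g, rfl⟩ := (InnerProductSpace.toDual ℝ E).surjective f
  refine ⟨‖g‖⁻¹ • g, ?_, ?_⟩
  · rw [norm_smul, norm_inv, norm_norm]
    exact inv_mul_le_one
  · rw [InnerProductSpace.toDual_apply_apply, LinearIsometryEquiv.norm_map,
      real_inner_smul_right, real_inner_self_eq_norm_mul_norm]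
    rcases eq_or_ne ‖g‖ 0 with h | h
    · simp [h]
    · field_simp

theorem IsClosed.closedBall_subset_of_closedBall_add_subset_add_closedBall [CompleteSpace E]
    {C : Set E} (hC : IsClosed C) (hconv : Convex ℝ C) {x : E} {s δ : ℝ} (hδ : 0 ≤ δ)
    (h : closedBall x (s + δ) ⊆ C + closedBall 0 δ) : closedBall x s ⊆ C := by
  intro z hz
  by_contra hzC
  obtain ⟨f, u, hfC, hfz⟩ := geometric_hahn_banach_closed_point hconv hC hzC
  -- moving `z` a distance `δ` in the direction where `f` grows fastest keeps it out of `C + B_δ`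
  obtain ⟨ν, hν, hfν⟩ := f.exists_norm_le_one_apply_eq_norm
  have hmem : z + δ • ν ∈ closedBall x (s + δ) := by
    refine mem_closedBall.2 ((dist_triangle _ z _).trans ?_)
    rw [dist_self_add_left, norm_smul, Real.norm_of_nonneg hδ, add_comm s]
    gcongr
    · exact mul_le_of_le_one_right hδ hν
    · exact hz
  obtain ⟨a, ha, e, he, hae⟩ := h hmem
  have hfe : f e ≤ ‖f‖ * δ :=
    (le_abs_self _).trans ((f.le_opNorm e).trans (by gcongr; exact mem_closedBall_zero_iff.1 he))
  have hsum : f a + f e = f z + δ * ‖f‖ := by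
    rw [← map_add, show a + e = z + δ • ν from hae, map_add, map_smul, hfν, smul_eq_mul]
  linarith [hfC a ha]

theorem exists_toReal_measure_add_closedBall_le [FiniteDimensional ℝ E] [MeasurableSpace E]
    [BorelSpace E] (μ : Measure E) [μ.IsAddHaarMeasure] {R : ℝ} (hR : 0 ≤ R) :
    ∃ c, ∀ (C : Set E) (δ : ℝ), IsCompact C → Convex ℝ C → C ⊆ closedBall 0 R → 0 ≤ δ →
      δ ≤ 1 → (μ (C + closedBall 0 δ)).toReal ≤ (μ C).toReal + δ * c := by
  obtain ⟨K, hK, hμK⟩ :=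
    exists_toReal_measure_le_mul_of_forall_not_closedBall_subset μ (R := R + 1) (by linarith)
  set m := finrank ℝ E
  refine ⟨(3 + 2 ^ (m + 1)) * K, fun C δ hC hconv hCR hδ hδ1 => ?_⟩
  have hμC : 0 ≤ (μ C).toReal := ENNReal.toReal_nonneg
  have hcδ : 0 ≤ δ * ((3 + 2 ^ (m + 1)) * K) := by positivity
  rcases subsingleton_or_nontrivial E with hE | hE
  · have hsub : C + closedBall 0 δ ⊆ C := by
      rintro _ ⟨a, ha, e, -, rfl⟩
      simpa [Subsingleton.elim e 0] using ha
    linarith [ENNReal.toReal_mono hC.measure_lt_top.ne (measure_mono (μ := μ) hsub)]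
  rcases hδ.eq_or_lt with rfl | hδ0
  · simp [closedBall_zero]
  by_cases hthin : ∀ x, ¬ closedBall x (2 * δ) ⊆ C
  · have hno : ∀ x, ¬ closedBall x (2 * δ + δ) ⊆ C + closedBall 0 δ := fun x hx =>
      hthin x (hC.isClosed.closedBall_subset_of_closedBall_add_subset_add_closedBall hconv hδ hx)
    have hsub : C + closedBall 0 δ ⊆ closedBall 0 (R + 1) := by
      refine (add_subset_add_right hCR).trans ?_
      rw [closedBall_add_closedBall hR hδ, add_zero]
      exact closedBall_subset_closedBall (by linarith)
    have := hμK _ _ (hC.add (isCompact_closedBall 0 δ)) (hconv.add (convex_closedBall 0 δ))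
      hsub hno
    have : 0 ≤ δ * 2 ^ (m + 1) * K := by positivity
    linarith
  · obtain ⟨r, hδr, ⟨x, hx⟩, hno⟩ :=
      exists_closedBall_subset_forall_not_closedBall_two_mul_subset hC.isBounded hδ0
        (not_forall_not.1 hthin)
    have hr : 0 < r := hδ0.trans hδr
    have h₁ := toReal_measure_add_closedBall_le_of_closedBall_subset μ hC hconv hr hx hδ hδr.le
    have h₂ := hμK C (2 * r) hC hconv (hCR.trans (closedBall_subset_closedBall (by linarith))) hno
    have h2m : (0 : ℝ) ≤ 2 ^ m - 1 := sub_nonneg.2 (one_le_pow₀ one_le_two)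
    have h₃ : (2 ^ m - 1) * (δ / r) * (μ C).toReal ≤ 2 * (2 ^ m - 1) * K * δ :=
      calc (2 ^ m - 1) * (δ / r) * (μ C).toReal ≤ (2 ^ m - 1) * (δ / r) * (K * (2 * r)) := by
            gcongr
        _ = 2 * (2 ^ m - 1) * K * δ := by field_simp
    have h2pow : (2 : ℝ) ^ (m + 1) = 2 * 2 ^ m := by ring
    nlinarith [mul_nonneg hK hδ]

end InnerProductSpace

theorem stmt15_general {W : Type*} [NormedAddCommGroup W] [InnerProductSpace ℝ W]
    [FiniteDimensional ℝ W] [MeasurableSpace W] [BorelSpace W]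
    (n : ℕ) :
    ∃ c : ℝ, ∀ C C' : Set W,
      C.Nonempty → C'.Nonempty → IsCompact C → IsCompact C' →
      Convex ℝ C → Convex ℝ C' →
      C ⊆ Metric.closedBall 0 n → C' ⊆ Metric.closedBall 0 n →
      Metric.hausdorffDist C C' ≤ 1 →
      |(μH[(Module.finrank ℝ W : ℝ)] C).toReal - (μH[(Module.finrank ℝ W : ℝ)] C').toReal|
        ≤ Metric.hausdorffDist C C' * c := by
  obtain ⟨c, hc⟩ := exists_toReal_measure_add_closedBall_le (μH[(finrank ℝ W : ℝ)] : Measure W)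
    n.cast_nonneg
  refine ⟨c, fun C C' hne hne' hC hC' hconv hconv' hCn hC'n hd => ?_⟩
  have hδ : 0 ≤ hausdorffDist C C' := hausdorffDist_nonneg
  have hfin := hausdorffEDist_ne_top_of_nonempty_of_bounded hne hne' hC.isBounded hC'.isBounded
  have hle : ∀ {A B : Set W}, IsCompact A → Convex ℝ A → A ⊆ closedBall 0 n →
      B ⊆ A + closedBall 0 (hausdorffDist C C') →
      (μH[(finrank ℝ W : ℝ)] B).toReal
        ≤ (μH[(finrank ℝ W : ℝ)] A).toReal + hausdorffDist C C' * c := fun hA hAc hAn hBA =>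
    (ENNReal.toReal_mono (hA.add (isCompact_closedBall 0 _)).measure_lt_top.ne
      (measure_mono hBA)).trans (hc _ _ hA hAc hAn hδ hd)
  rw [abs_sub_le_iff]
  constructor
  · have := hle (B := C) hC' hconv' hC'n (by
      rw [hC'.add_closedBall_zero hδ]
      exact subset_cthickening_hausdorffDist hfin)
    linarith
  · have := hle (B := C') hC hconv hCn (by
      rw [hC.add_closedBall_zero hδ, hausdorffDist_comm]
      exact subset_cthickening_hausdorffDist (by rwa [hausdorffEDist_comm]))
    linarith

/-- Steiner-type estimate: on an `m`-dimensional Euclidean space, there is a constant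
`c(m,n)` such that any two nonempty compact convex subsets of the ball of radius `n`
at Hausdorff distance `δ ≤ 1` have `𝓗ᵐ` measures differing by at most `δ · c(m,n)`. -/
theorem stmt15 {W : Type*} [NormedAddCommGroup W] [InnerProductSpace ℝ W]
    [FiniteDimensional ℝ W] [MeasurableSpace W] [BorelSpace W]
    (n : ℕ) (hn : 0 < n) :
    ∃ c : ℝ, ∀ C C' : Set W,
      C.Nonempty → C'.Nonempty → IsCompact C → IsCompact C' →
      Convex ℝ C → Convex ℝ C' →
      C ⊆ Metric.closedBall 0 n → C' ⊆ Metric.closedBall 0 n →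
      Metric.hausdorffDist C C' ≤ 1 →
      |(μH[(Module.finrank ℝ W : ℝ)] C).toReal - (μH[(Module.finrank ℝ W : ℝ)] C').toReal|
        ≤ Metric.hausdorffDist C C' * c :=
  stmt15_general n
end

section
/- Let X = ℝ³ with the sup norm ‖·‖_∞ and let W = {(x₁,x₂,x₃) : x₁ + x₂ + x₃ = 0}. Then every linear projector π : X → X with image W and π|_W = id_W has Lipschitz constant (with respect to ‖·‖_∞) strictly greater than 1. (In fact Lip π ≥ 1 + 1/7.) -/
/-!
Write `s x = ∑ i, x i` on `ℝⁿ`. For any `e` with `s e = 1`, the vector `x - s x • e` lies in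
`ker s`, so a projector `π` onto `ker s` is `π x = x - s x • u` with `u = e - π e`, and `s u = 1`
since `π e ∈ ker s`. The vectors `vᵢ = 2 eᵢ - 1` have sup norm `1` and sum `2 - n`, so
`(π vᵢ) i = 1 + (n - 2) uᵢ ≤ K`; summing over `i` gives `2n - 2 ≤ n K`, i.e. `K ≥ 2 - 2/n`,
which is `4/3` for `n = 3`.
-/

open Finset

theorem LinearMap.eq_sub_smul_of_eqOn_ker {R M : Type*} [CommRing R] [AddCommGroup M] [Module R M]
    {π : M →ₗ[R] M} {φ : M →ₗ[R] R} (hid : ∀ x, φ x = 0 → π x = x) {e : M} (he : φ e = 1)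
    (x : M) : π x = x - φ x • (e - π e) := by
  have hker : π (x - φ x • e) = x - φ x • e := hid _ (by simp [he])
  rw [map_sub, map_smul, sub_eq_iff_eq_add] at hker
  rw [hker]
  module

section SumZeroHyperplane

variable {ι : Type*} [Fintype ι] [DecidableEq ι]

theorem norm_single_two_sub_one_le (i : ι) : ‖(Pi.single i 2 - 1 : ι → ℝ)‖ ≤ 1 := by
  refine (pi_norm_le_iff_of_nonneg zero_le_one).2 fun j => ?_
  by_cases h : j = i
  · subst h; norm_num
  · simp [h]

theorem sum_single_two_sub_one (i : ι) :
    ∑ j, (Pi.single i 2 - 1 : ι → ℝ) j = 2 - Fintype.card ι := by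
  simp [sum_sub_distrib]

theorem two_sub_two_div_card_le_of_lipschitzWith [Nonempty ι]
    (π : (ι → ℝ) →ₗ[ℝ] (ι → ℝ)) (hrange : ∀ x, ∑ i, π x i = 0)
    (hid : ∀ x, ∑ i, x i = 0 → π x = x) {K : NNReal} (hK : LipschitzWith K π) :
    2 - 2 / Fintype.card ι ≤ (K : ℝ) := by
  set φ : (ι → ℝ) →ₗ[ℝ] ℝ := ∑ i, LinearMap.proj i
  have hφ (x : ι → ℝ) : φ x = ∑ i, x i := by simp [φ]
  obtain ⟨i₀⟩ := ‹Nonempty ι›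
  set u := Pi.single i₀ 1 - π (Pi.single i₀ 1)
  have hπ (x) : π x = x - φ x • u :=
    LinearMap.eq_sub_smul_of_eqOn_ker (fun x hx => hid x (by rwa [← hφ])) (by simp [hφ]) x
  have hu : ∑ i, u i = 1 := by simp [u, sum_sub_distrib, hrange]
  have hcoord (i : ι) : π (Pi.single i 2 - 1) i ≤ K :=
    calc π (Pi.single i 2 - 1) i ≤ ‖π (Pi.single i 2 - 1)‖ :=
          (le_abs_self _).trans (norm_le_pi_norm (π (Pi.single i 2 - 1)) i)
      _ ≤ K * ‖(Pi.single i 2 - 1 : ι → ℝ)‖ := hK.norm_le_mul (map_zero π) _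
      _ ≤ K * 1 := by gcongr; exact norm_single_two_sub_one_le i
      _ = K := mul_one _
  have hdiag (i : ι) : π (Pi.single i 2 - 1) i = 1 + (Fintype.card ι - 2) * u i := by
    rw [hπ, hφ, sum_single_two_sub_one]
    simp only [Pi.sub_apply, Pi.smul_apply, Pi.single_eq_same, Pi.one_apply, smul_eq_mul]
    ring
  have htotal : ∑ i, π (Pi.single i 2 - 1) i = 2 * Fintype.card ι - 2 := by
    simp only [hdiag, sum_add_distrib, ← mul_sum, hu, sum_const, card_univ, nsmul_eq_mul]
    ring
  have hn : (0 : ℝ) < Fintype.card ι := by exact_mod_cast Fintype.card_pos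
  have hsum := sum_le_sum fun i (_ : i ∈ univ) => hcoord i
  rw [htotal, sum_const, card_univ, nsmul_eq_mul] at hsum
  rw [show 2 - 2 / (Fintype.card ι : ℝ) = (2 * Fintype.card ι - 2) / Fintype.card ι by
    field_simp, div_le_iff₀ hn]
  linarith

end SumZeroHyperplane

/-- In `ℝ³` with the sup norm, any linear projector onto the hyperplane
`W = {x : x₀ + x₁ + x₂ = 0}` has Lipschitz constant at least `1 + 1/7 = 8/7`;
in particular strictly greater than `1`. -/
theorem stmt16 (π : (Fin 3 → ℝ) →ₗ[ℝ] (Fin 3 → ℝ))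
    (hrange : ∀ x, π x 0 + π x 1 + π x 2 = 0)
    (hid : ∀ x : Fin 3 → ℝ, x 0 + x 1 + x 2 = 0 → π x = x) :
    ∀ K : NNReal, LipschitzWith K π → (8 / 7 : ℝ) ≤ K := by
  intro K hK
  have h := two_sub_two_div_card_le_of_lipschitzWith π
    (fun x => by simpa only [Fin.sum_univ_three] using hrange x)
    (fun x hx => hid x (by simpa only [Fin.sum_univ_three] using hx)) hK
  rw [Fintype.card_fin] at h
  norm_num at h
  linarith
end

section
/- Let X be a finite-dimensional real normed space with norm ‖·‖, W an m-dimensional subspace, and μ a Borel probability measure on the space Hom_m(X,X) of rank-≤m endomorphisms supported in {π : ran π ⊆ W}. Suppose that for every m-dimensional subspace V of X there exists some Borel set A ⊆ V with 0 < 𝓗ᵐ_{‖·‖}(A) < ∞ and ∫ 𝓗ᵐ_{‖·‖}(π(A)) dμ(π) ≤ 𝓗ᵐ_{‖·‖}(A), with equality when V = W. Then the same inequality (with equality when V = W) holds for every Borel set A ⊆ V and every m-dimensional subspace V; i.e., μ is a density contractor on W. -/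
/-!
For fixed `π`, the set function `A ↦ 𝓗ᵐ(π A)` on an `m`-dimensional subspace `V` is a constant
multiple `c π` of `𝓗ᵐ`: if `π` is injective on `V` it is a Haar measure on `V` transported from
`π V`, and otherwise `π V` has dimension `< m`, so the images are `𝓗ᵐ`-null. Hence
`∫ 𝓗ᵐ(π A) dμ = (∫ c π dμ) · 𝓗ᵐ(A)`, and a single test set of positive finite measure decides
whether `∫ c π dμ ≤ 1` (resp. `= 1`).
-/

open MeasureTheory Module Set Function
open scoped ENNReal

section Lintegral

variable {α : Type*} [MeasurableSpace α] {μ : Measure α} {c : α → ℝ≥0∞} {r : ℝ≥0∞}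

theorem lintegral_le_one_of_lintegral_mul_const_le (hr₀ : r ≠ 0) (hr : r ≠ ∞)
    (h : ∫⁻ a, c a * r ∂μ ≤ r) : ∫⁻ a, c a ∂μ ≤ 1 := by
  rw [lintegral_mul_const' r c hr] at h
  exact (ENNReal.mul_le_mul_iff_left hr₀ hr).1 (by rwa [one_mul])

theorem lintegral_eq_one_of_lintegral_mul_const_eq (hr₀ : r ≠ 0) (hr : r ≠ ∞)
    (h : ∫⁻ a, c a * r ∂μ = r) : ∫⁻ a, c a ∂μ = 1 := by
  rwa [lintegral_mul_const' r c hr, ENNReal.mul_eq_right hr₀ hr] at h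

theorem lintegral_mul_const_le_self (hc : ∫⁻ a, c a ∂μ ≤ 1) (r : ℝ≥0∞) :
    ∫⁻ a, c a * r ∂μ ≤ r := by
  rcases eq_or_ne r ∞ with rfl | hr
  · exact le_top
  · rw [lintegral_mul_const' r c hr]
    exact mul_le_of_le_one_left' hc

theorem lintegral_mul_const_eq_self (hc : ∫⁻ a, c a ∂μ = 1) (r : ℝ≥0∞) :
    ∫⁻ a, c a * r ∂μ = r :=
  (lintegral_mul_const_le_self hc.le r).antisymm <| by
    simpa [hc] using lintegral_mul_const_le r c (μ := μ)

end Lintegral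

section HausdorffImage

variable {E F : Type*} [NormedAddCommGroup E] [NormedSpace ℝ E] [MeasurableSpace E] [BorelSpace E]
  [NormedAddCommGroup F] [NormedSpace ℝ F] [MeasurableSpace F] [BorelSpace F]

theorem ContinuousLinearEquiv.exists_addHaar_image_eq_mul [FiniteDimensional ℝ E]
    (μ : Measure E) [μ.IsAddHaarMeasure] (ν : Measure F) [ν.IsAddHaarMeasure] (e : E ≃L[ℝ] F) :
    ∃ c : ℝ≥0∞, ∀ s, ν (e '' s) = c * μ s := by
  have := e.symm.isAddHaarMeasure_map ν
  refine ⟨(ν.map e.symm).addHaarScalarFactor μ, fun s => ?_⟩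
  calc ν (e '' s) = ν.map e.symm s := by
        rw [e.image_eq_preimage_symm]
        exact (e.symm.toHomeomorph.toMeasurableEquiv.map_apply s).symm
    _ = _ := by
        conv_lhs => rw [Measure.isAddLeftInvariant_eq_smul (ν.map e.symm) μ]
        rfl

theorem LinearMap.exists_hausdorffMeasure_image_eq_mul [FiniteDimensional ℝ E] (f : E →ₗ[ℝ] F) :
    ∃ c : ℝ≥0∞, ∀ s : Set E, μH[finrank ℝ E] (f '' s) = c * μH[finrank ℝ E] s := by
  have h_range (s : Set E) : μH[finrank ℝ E] (f '' s) = μH[finrank ℝ E] (f.rangeRestrict '' s) := by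
    rw [← (isometry_subtype_coe (s := (f.range : Set F))).hausdorffMeasure_image
      (Or.inl (Nat.cast_nonneg _)), image_image]
    rfl
  rcases f.finrank_range_le.lt_or_eq with hlt | heq
  · refine ⟨0, fun s => ?_⟩
    rw [h_range, zero_mul, Real.hausdorffMeasure_of_finrank_lt (by exact_mod_cast hlt)]
    rfl
  · have hbij : Bijective f.rangeRestrict :=
      ⟨(injective_iff_surjective_of_finrank_eq_finrank heq.symm).2 f.surjective_rangeRestrict,
        f.surjective_rangeRestrict⟩
    have : (μH[finrank ℝ E] : Measure f.range).IsAddHaarMeasure := by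
      rw [← heq]; infer_instance
    obtain ⟨c, hc⟩ := (LinearEquiv.ofBijective _ hbij).toContinuousLinearEquiv
      |>.exists_addHaar_image_eq_mul μH[finrank ℝ E] μH[finrank ℝ E]
    exact ⟨c, fun s => (h_range s).trans (hc s)⟩

theorem Submodule.exists_hausdorffMeasure_image_eq_mul (V : Submodule ℝ E) [FiniteDimensional ℝ V]
    (π : E →L[ℝ] F) :
    ∃ c : ℝ≥0∞, ∀ A ⊆ (V : Set E), μH[finrank ℝ V] (π '' A) = c * μH[finrank ℝ V] A := by
  obtain ⟨c, hc⟩ := (π.toLinearMap ∘ₗ V.subtype).exists_hausdorffMeasure_image_eq_mul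
  refine ⟨c, fun A hA => ?_⟩
  obtain ⟨s, rfl⟩ : ∃ s : Set V, Subtype.val '' s = A :=
    ⟨_, image_preimage_eq_of_subset (by rwa [Subtype.range_coe])⟩
  have h_val : μH[finrank ℝ V] (Subtype.val '' s) = μH[finrank ℝ V] s :=
    isometry_subtype_coe.hausdorffMeasure_image (Or.inl (Nat.cast_nonneg _)) s
  rw [image_image, h_val]
  exact hc s

theorem Submodule.exists_lintegral_hausdorffMeasure_image_eq_lintegral_mul (V : Submodule ℝ E)
    [FiniteDimensional ℝ V] [MeasurableSpace (E →L[ℝ] F)] (μ : Measure (E →L[ℝ] F)) :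
    ∃ c : (E →L[ℝ] F) → ℝ≥0∞, ∀ A ⊆ (V : Set E),
      ∫⁻ π, μH[finrank ℝ V] (π '' A) ∂μ = ∫⁻ π, c π * μH[finrank ℝ V] A ∂μ := by
  choose c hc using V.exists_hausdorffMeasure_image_eq_mul (F := F)
  exact ⟨c, fun A hA => lintegral_congr fun π => hc π A hA⟩

end HausdorffImage

theorem stmt18_general {X : Type*} [NormedAddCommGroup X] [NormedSpace ℝ X]
    [FiniteDimensional ℝ X] [MeasurableSpace X] [BorelSpace X]
    [MeasurableSpace (X →L[ℝ] X)]
    (m : ℕ) (W : Submodule ℝ X) (hW : Module.finrank ℝ W = m)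
    (μ : Measure (X →L[ℝ] X))
    (h1 : ∀ V : Submodule ℝ X, Module.finrank ℝ V = m →
      ∃ A : Set X, A ⊆ (V : Set X) ∧ MeasurableSet A ∧
        0 < μH[(m : ℝ)] A ∧ μH[(m : ℝ)] A < ⊤ ∧
        ∫⁻ π, μH[(m : ℝ)] (⇑π '' A) ∂μ ≤ μH[(m : ℝ)] A)
    (h2 : ∃ A : Set X, A ⊆ (W : Set X) ∧ MeasurableSet A ∧
        0 < μH[(m : ℝ)] A ∧ μH[(m : ℝ)] A < ⊤ ∧
        ∫⁻ π, μH[(m : ℝ)] (⇑π '' A) ∂μ = μH[(m : ℝ)] A) :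
    (∀ V : Submodule ℝ X, Module.finrank ℝ V = m →
      ∀ A : Set X, A ⊆ (V : Set X) → MeasurableSet A →
        ∫⁻ π, μH[(m : ℝ)] (⇑π '' A) ∂μ ≤ μH[(m : ℝ)] A) ∧
    (∀ A : Set X, A ⊆ (W : Set X) → MeasurableSet A →
        ∫⁻ π, μH[(m : ℝ)] (⇑π '' A) ∂μ = μH[(m : ℝ)] A) := by
  refine ⟨fun V hV A hAV _ => ?_, fun A hAW _ => ?_⟩
  · obtain ⟨c, hc⟩ := V.exists_lintegral_hausdorffMeasure_image_eq_lintegral_mul μ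
    rw [hV] at hc
    obtain ⟨A₀, hA₀V, -, hA₀_pos, hA₀_fin, hA₀⟩ := h1 V hV
    rw [hc A₀ hA₀V] at hA₀
    rw [hc A hAV]
    exact lintegral_mul_const_le_self
      (lintegral_le_one_of_lintegral_mul_const_le hA₀_pos.ne' hA₀_fin.ne hA₀) _
  · obtain ⟨c, hc⟩ := W.exists_lintegral_hausdorffMeasure_image_eq_lintegral_mul μ
    rw [hW] at hc
    obtain ⟨A₀, hA₀W, -, hA₀_pos, hA₀_fin, hA₀⟩ := h2
    rw [hc A₀ hA₀W] at hA₀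
    rw [hc A hAW]
    exact lintegral_mul_const_eq_self
      (lintegral_eq_one_of_lintegral_mul_const_eq hA₀_pos.ne' hA₀_fin.ne hA₀) _

/-- Criterion for being a density contractor: if a Borel probability measure `μ` on the
rank-`≤ m` endomorphisms, supported in `Hom(X,W)`, contracts the `𝓗ᵐ` measure of a single
Borel subset of positive finite measure of each `m`-dimensional subspace `V` (with
equality for one such subset of `W`), then it does so for every Borel subset of every
`m`-dimensional subspace, with equality for subsets of `W`. -/
theorem stmt18 {X : Type*} [NormedAddCommGroup X] [NormedSpace ℝ X]
    [FiniteDimensional ℝ X] [MeasurableSpace X] [BorelSpace X]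
    [MeasurableSpace (X →L[ℝ] X)] [BorelSpace (X →L[ℝ] X)]
    (m : ℕ) (hm : 1 ≤ m) (W : Submodule ℝ X) (hW : Module.finrank ℝ W = m)
    (μ : Measure (X →L[ℝ] X)) [IsProbabilityMeasure μ]
    (hsupp : μ {π : X →L[ℝ] X |
      ¬ (Module.finrank ℝ (LinearMap.range π.toLinearMap) ≤ m ∧
          LinearMap.range π.toLinearMap ≤ W)} = 0)
    (h1 : ∀ V : Submodule ℝ X, Module.finrank ℝ V = m →
      ∃ A : Set X, A ⊆ (V : Set X) ∧ MeasurableSet A ∧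
        0 < μH[(m : ℝ)] A ∧ μH[(m : ℝ)] A < ⊤ ∧
        ∫⁻ π, μH[(m : ℝ)] (⇑π '' A) ∂μ ≤ μH[(m : ℝ)] A)
    (h2 : ∃ A : Set X, A ⊆ (W : Set X) ∧ MeasurableSet A ∧
        0 < μH[(m : ℝ)] A ∧ μH[(m : ℝ)] A < ⊤ ∧
        ∫⁻ π, μH[(m : ℝ)] (⇑π '' A) ∂μ = μH[(m : ℝ)] A) :
    (∀ V : Submodule ℝ X, Module.finrank ℝ V = m →
      ∀ A : Set X, A ⊆ (V : Set X) → MeasurableSet A →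
        ∫⁻ π, μH[(m : ℝ)] (⇑π '' A) ∂μ ≤ μH[(m : ℝ)] A) ∧
    (∀ A : Set X, A ⊆ (W : Set X) → MeasurableSet A →
        ∫⁻ π, μH[(m : ℝ)] (⇑π '' A) ∂μ = μH[(m : ℝ)] A) :=
  stmt18_general m W hW μ h1 h2
end
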